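/- arXiv:0708.2545 — 10 statements merged into one kernel-verified Lean document; each statement's English description precedes it below -/
import Mathlib

section
/- Let H be a reflexive semicomplete digraph that does not contain R (the reflexive digraph on vertices {1,2,3} with non-loop arcs 12, 23, 31, 13) as an induced subdigraph, and suppose that in some ordering v_1,...,v_n of its vertices, whenever i < j < k and v_i v_k is a symmetric arc, both v_i v_j and v_j v_k are symmetric arcs, and moreover every consecutive pair v_i v_{i+1} is a symmetric arc. Then for every vertex v_i, if v_i strictly dominates some v_j with j > i, then v_i dominates all vertices v_k with k > i. -/
/-! If `i` strictly dominates a later vertex `c`, then it also strictly dominates `c + 1`: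
`i ↔ c + 1` would force `i ↔ c` by the umbrella property, and `c + 1 → i` strictly would make
`c + 1, i, c` an induced copy of `R`, since `c ↔ c + 1`. Dually, strict domination of `i` by later
vertices propagates forward. So if `i` strictly dominates `j > i` but misses some `k > i`, then
`k` strictly dominates `i`, and propagating from the earlier of `j, k` to the later one gives a
contradiction. -/

namespace SemicompleteDigraph

section General

variable {α : Type*} (A : α → α → Prop)

def SymmArc (u v : α) : Prop := A u v ∧ A v u

def StrictlyDominates (u v : α) : Prop := A u v ∧ ¬ A v u

def IsSemicomplete : Prop := ∀ u v : α, u ≠ v → A u v ∨ A v u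

/-- No induced copy of `R`, with `a, b, c` playing the roles of `1, 2, 3`. -/
def RFree : Prop := ¬ ∃ a b c : α, a ≠ b ∧ a ≠ c ∧ b ≠ c ∧
  A a b ∧ A b c ∧ A c a ∧ A a c ∧ ¬ A b a ∧ ¬ A c b

variable {A}

theorem SymmArc.symm {u v : α} (h : SymmArc A u v) : SymmArc A v u := ⟨h.2, h.1⟩

theorem IsSemicomplete.strictlyDominates_or (hsemi : IsSemicomplete A) {u v : α} (huv : u ≠ v)
    (hsymm : ¬ SymmArc A u v) : StrictlyDominates A u v ∨ StrictlyDominates A v u := by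
  rcases hsemi u v huv with h | h
  · exact .inl ⟨h, fun h' => hsymm ⟨h, h'⟩⟩
  · exact .inr ⟨h, fun h' => hsymm ⟨h', h⟩⟩

theorem RFree.not_symmArc_of_strictlyDominates (hR : RFree A) {i x y : α}
    (hix : StrictlyDominates A i x) (hyi : StrictlyDominates A y i) : ¬ SymmArc A x y := by
  rintro ⟨hxy, hyx⟩
  have hxi : x ≠ i := by rintro rfl; exact hix.2 hix.1
  have hyi' : y ≠ i := by rintro rfl; exact hyi.2 hyi.1
  have hxy' : x ≠ y := by rintro rfl; exact hyi.2 hix.1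
  exact hR ⟨y, i, x, hyi', hxy'.symm, hxi.symm, hyi.1, hix.1, hxy, hyx, hyi.2, hix.2⟩

end General

section Ordered

variable {n : ℕ} (A : Fin n → Fin n → Prop)

def IsUmbrellaOrdering : Prop := ∀ i j k : Fin n, i < j → j < k → SymmArc A i k →
  SymmArc A i j ∧ SymmArc A j k

def ConsecutiveSymmArcs : Prop := ∀ i : Fin n, ∀ h : i.val + 1 < n, SymmArc A i ⟨i.val + 1, h⟩

variable {A}

theorem _root_.Fin.le_induction_of_succ {P : Fin n → Prop} {a : Fin n}
    (hstep : ∀ c : Fin n, a ≤ c → ∀ hc : c.val + 1 < n, P c → P ⟨c.val + 1, hc⟩)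
    (ha : P a) : ∀ k : Fin n, a ≤ k → P k := by
  suffices h : ∀ m, a.val ≤ m → ∀ hm : m < n, P ⟨m, hm⟩ from fun k hak => h k hak k.isLt
  intro m ham
  induction m, ham using Nat.le_induction with
  | base => exact fun _ => ha
  | succ m ham ih => exact fun hm => hstep ⟨m, by omega⟩ ham hm (ih (by omega))

theorem strictlyDominates_succ (hsemi : IsSemicomplete A) (hR : RFree A)
    (hU : IsUmbrellaOrdering A) (hC : ConsecutiveSymmArcs A) {i c : Fin n} (hic : i < c)
    (hc : c.val + 1 < n) (h : StrictlyDominates A i c) :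
    StrictlyDominates A i ⟨c.val + 1, hc⟩ := by
  have hc' : c < ⟨c.val + 1, hc⟩ := Fin.lt_def.mpr (Nat.lt_succ_self _)
  have hsymm : ¬ SymmArc A i ⟨c.val + 1, hc⟩ := fun hs => h.2 (hU i c _ hic hc' hs).1.2
  refine (hsemi.strictlyDominates_or (hic.trans hc').ne hsymm).resolve_right fun h' => ?_
  exact hR.not_symmArc_of_strictlyDominates h h' (hC c hc)

theorem strictlyDominates_succ_left (hsemi : IsSemicomplete A) (hR : RFree A)
    (hU : IsUmbrellaOrdering A) (hC : ConsecutiveSymmArcs A) {i c : Fin n} (hic : i < c)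
    (hc : c.val + 1 < n) (h : StrictlyDominates A c i) :
    StrictlyDominates A ⟨c.val + 1, hc⟩ i := by
  have hc' : c < ⟨c.val + 1, hc⟩ := Fin.lt_def.mpr (Nat.lt_succ_self _)
  have hsymm : ¬ SymmArc A i ⟨c.val + 1, hc⟩ := fun hs => h.2 (hU i c _ hic hc' hs).1.1
  refine (hsemi.strictlyDominates_or (hic.trans hc').ne hsymm).resolve_left fun h' => ?_
  exact hR.not_symmArc_of_strictlyDominates h' h (hC c hc).symm

theorem strictlyDominates_of_le (hsemi : IsSemicomplete A) (hR : RFree A)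
    (hU : IsUmbrellaOrdering A) (hC : ConsecutiveSymmArcs A) {i a k : Fin n} (hia : i < a)
    (h : StrictlyDominates A i a) (hak : a ≤ k) : StrictlyDominates A i k :=
  Fin.le_induction_of_succ
    (fun _ hac hc => strictlyDominates_succ hsemi hR hU hC (hia.trans_le hac) hc) h k hak

theorem strictlyDominates_of_le_left (hsemi : IsSemicomplete A) (hR : RFree A)
    (hU : IsUmbrellaOrdering A) (hC : ConsecutiveSymmArcs A) {i a k : Fin n} (hia : i < a)
    (h : StrictlyDominates A a i) (hak : a ≤ k) : StrictlyDominates A k i :=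
  Fin.le_induction_of_succ
    (fun _ hac hc => strictlyDominates_succ_left hsemi hR hU hC (hia.trans_le hac) hc) h k hak

end Ordered

end SemicompleteDigraph

open SemicompleteDigraph

theorem stmt0_general {n : ℕ} (A : Fin n → Fin n → Prop)
    (hsemi : ∀ u v : Fin n, u ≠ v → A u v ∨ A v u)
    (hnoR : ¬ ∃ a b c : Fin n, a ≠ b ∧ a ≠ c ∧ b ≠ c ∧
      A a b ∧ A b c ∧ A c a ∧ A a c ∧ ¬ A b a ∧ ¬ A c b)
    (horder : ∀ i j k : Fin n, i < j → j < k → (A i k ∧ A k i) →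
      (A i j ∧ A j i) ∧ (A j k ∧ A k j))
    (hconsec : ∀ i : Fin n, ∀ h : i.val + 1 < n,
      A i ⟨i.val + 1, h⟩ ∧ A ⟨i.val + 1, h⟩ i) :
    ∀ i j : Fin n, i < j → A i j → ¬ A j i → ∀ k : Fin n, i < k → A i k := by
  intro i j hij hAij hAji k hik
  by_contra hAik
  have hki : StrictlyDominates A k i := ⟨(hsemi i k hik.ne).resolve_left hAik, hAik⟩
  rcases le_total j k with hjk | hkj
  · exact hAik (strictlyDominates_of_le hsemi hnoR horder hconsec hij ⟨hAij, hAji⟩ hjk).1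
  · exact hAji (strictlyDominates_of_le_left hsemi hnoR horder hconsec hik hki hkj).1

/-- In a reflexive semicomplete digraph with no induced `R`,
if the ordering `0,...,n-1` satisfies the proper-interval umbrella condition for
symmetric arcs and all consecutive arcs are symmetric, then a vertex strictly
dominating some later vertex dominates all later vertices. -/
theorem stmt0 {n : ℕ} (A : Fin n → Fin n → Prop)
    (hrefl : ∀ v, A v v)
    (hsemi : ∀ u v : Fin n, u ≠ v → A u v ∨ A v u)
    (hnoR : ¬ ∃ a b c : Fin n, a ≠ b ∧ a ≠ c ∧ b ≠ c ∧
      A a b ∧ A b c ∧ A c a ∧ A a c ∧ ¬ A b a ∧ ¬ A c b)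
    (horder : ∀ i j k : Fin n, i < j → j < k → (A i k ∧ A k i) →
      (A i j ∧ A j i) ∧ (A j k ∧ A k j))
    (hconsec : ∀ i : Fin n, ∀ h : i.val + 1 < n,
      A i ⟨i.val + 1, h⟩ ∧ A ⟨i.val + 1, h⟩ i) :
    ∀ i j : Fin n, i < j → A i j → ¬ A j i → ∀ k : Fin n, i < k → A i k :=
  stmt0_general A hsemi hnoR horder hconsec
end

section
/- Let H be a reflexive semicomplete digraph not containing R as an induced subdigraph, whose symmetric subdigraph H^sym is connected, and such that the underlying undirected graph of H^sym admits an ordering v_1,...,v_n with the property that i < j < k and v_i v_k ∈ E imply v_i v_j ∈ E and v_j v_k ∈ E. Then either the ordering v_1,...,v_n or its reversal has the additional property that v_i → v_j (v_i dominates v_j) for every pair i < j. -/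
/-!
Call a pair `i < j` mixed if `ij` is not a symmetric arc. By the umbrella property, moving `i`
left or `j` right keeps a pair mixed, and consecutive vertices are joined by symmetric arcs
(a symmetric path between them must cross, and the umbrella property pulls the crossing arc in).
Excluding `R` means a one-way arc `x → y` stays a one-way arc in the same direction when `x` or
`y` is replaced by a symmetric neighbour, so a mixed pair keeps its orientation when it is moved
one step. Any two mixed pairs can be moved to a common one, so all of them point the same way.
-/

open Relation Order

theorem Relation.ReflTransGen.exists_rel_of_not {α : Type*} {r : α → α → Prop}
    {p : α → Prop} {a b : α} (h : ReflTransGen r a b) (ha : p a) (hb : ¬ p b) :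
    ∃ x y, p x ∧ ¬ p y ∧ r x y := by
  induction h with
  | refl => exact absurd ha hb
  | @tail c d _ hcd ih =>
    by_cases hc : p c
    · exact ⟨c, d, hc, hb, hcd⟩
    · exact ih hc

section

variable {α : Type*} {A : α → α → Prop}

def SymmPart (A : α → α → Prop) (x y : α) : Prop := A x y ∧ A y x

def IsSemicomplete (A : α → α → Prop) : Prop := ∀ u v, u ≠ v → A u v ∨ A v u

-- `a ↔ c`, `a → b` and `b → c` only: a copy of `R` with `1, 2, 3 = a, b, c`.
def IsInducedRFree (A : α → α → Prop) : Prop :=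
  ¬ ∃ a b c : α, a ≠ b ∧ a ≠ c ∧ b ≠ c ∧
    A a b ∧ A b c ∧ A c a ∧ A a c ∧ ¬ A b a ∧ ¬ A c b

def IsUmbrellaOrder [LT α] (A : α → α → Prop) : Prop :=
  ∀ i j k : α, i < j → j < k → SymmPart A i k → SymmPart A i j ∧ SymmPart A j k

namespace IsInducedRFree

variable {x y z x' y' : α}

theorem rel_of_symmPart_left (hR : IsInducedRFree A) (hs : IsSemicomplete A)
    (hxy : A x y) (hyx : ¬ A y x) (hzx : SymmPart A z x) : A z y := by
  by_contra hzy
  have hyz : A y z := (hs y z fun h => by subst h; exact hyx hzx.1).resolve_right hzy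
  refine hR ⟨x, y, z, ?_, ?_, ?_, hxy, hyz, hzx.1, hzx.2, hyx, hzy⟩
  · rintro rfl; exact hyx hxy
  · rintro rfl; exact hzy hxy
  · rintro rfl; exact hyx hzx.1

theorem rel_of_symmPart_right (hR : IsInducedRFree A) (hs : IsSemicomplete A)
    (hxy : A x y) (hyx : ¬ A y x) (hyz : SymmPart A y z) : A x z := by
  by_contra hxz
  have hzx : A z x := (hs z x fun h => by subst h; exact hyx hyz.1).resolve_right hxz
  refine hR ⟨z, x, y, ?_, ?_, ?_, hzx, hxy, hyz.1, hyz.2, hxz, hyx⟩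
  · rintro rfl; exact hyx hyz.1
  · rintro rfl; exact hxz hxy
  · rintro rfl; exact hyx hxy

theorem rel_iff_of_symmPart_right (hR : IsInducedRFree A) (hs : IsSemicomplete A)
    (hy : ¬ SymmPart A x y) (hy' : ¬ SymmPart A x y') (h : SymmPart A y y') :
    A x y ↔ A x y' :=
  ⟨fun hxy => hR.rel_of_symmPart_right hs hxy (fun hyx => hy ⟨hxy, hyx⟩) h,
    fun hxy' => hR.rel_of_symmPart_right hs hxy' (fun hyx => hy' ⟨hxy', hyx⟩) ⟨h.2, h.1⟩⟩

theorem rel_iff_of_symmPart_left (hR : IsInducedRFree A) (hs : IsSemicomplete A)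
    (hx : ¬ SymmPart A x y) (hx' : ¬ SymmPart A x' y) (h : SymmPart A x x') :
    A x y ↔ A x' y :=
  ⟨fun hxy => hR.rel_of_symmPart_left hs hxy (fun hyx => hx ⟨hxy, hyx⟩) ⟨h.2, h.1⟩,
    fun hxy' => hR.rel_of_symmPart_left hs hxy' (fun hyx => hx' ⟨hxy', hyx⟩) h⟩

end IsInducedRFree

end

namespace IsUmbrellaOrder

variable {α : Type*} [LinearOrder α] {A : α → α → Prop}

theorem symmPart_of_le (hU : IsUmbrellaOrder A) (hrefl : ∀ v, A v v) {i j k : α}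
    (hij : i ≤ j) (hjk : j ≤ k) (h : SymmPart A i k) : SymmPart A i j ∧ SymmPart A j k := by
  rcases hij.eq_or_lt with rfl | hij
  · exact ⟨⟨hrefl i, hrefl i⟩, h⟩
  rcases hjk.eq_or_lt with rfl | hjk
  · exact ⟨h, ⟨hrefl j, hrefl j⟩⟩
  exact hU i j k hij hjk h

theorem not_symmPart_of_le (hU : IsUmbrellaOrder A) (hrefl : ∀ v, A v v) {i j i' j' : α}
    (hi : i' ≤ i) (hij : i ≤ j) (hj : j ≤ j') (h : ¬ SymmPart A i j) : ¬ SymmPart A i' j' :=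
  fun h' => h (hU.symmPart_of_le hrefl hij hj
    (hU.symmPart_of_le hrefl hi (hij.trans hj) h').2).1

theorem symmPart_of_wcovBy (hU : IsUmbrellaOrder A) (hrefl : ∀ v, A v v)
    (hconn : ∀ u v, ReflTransGen (SymmPart A) u v) {a b : α} (hab : a ⩿ b) :
    SymmPart A a b := by
  rcases hab.le.eq_or_lt with rfl | hlt
  · exact ⟨hrefl a, hrefl a⟩
  obtain ⟨x, y, hxa, hay, hxy⟩ :=
    (hconn a b).exists_rel_of_not (p := (· ≤ a)) le_rfl hlt.not_ge
  have hby : b ≤ y := not_lt.mp fun hyb => hab.2 (not_le.mp hay) hyb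
  have hsay : SymmPart A a y := (hU.symmPart_of_le hrefl hxa (hab.le.trans hby) hxy).2
  exact (hU.symmPart_of_le hrefl hab.le hby hsay).1

theorem rel_iff_of_le_right [SuccOrder α] [IsSuccArchimedean α]
    (hU : IsUmbrellaOrder A) (hrefl : ∀ v, A v v)
    (hconn : ∀ u v, ReflTransGen (SymmPart A) u v) (hR : IsInducedRFree A)
    (hs : IsSemicomplete A)
    {i j j' : α} (hij : i ≤ j) (hj : j ≤ j') (h : ¬ SymmPart A i j) : A i j' ↔ A i j := by
  induction hj using Succ.rec with
  | rfl => rfl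
  | succ k hjk ih =>
    rw [← ih]
    exact (hR.rel_iff_of_symmPart_right hs (hU.not_symmPart_of_le hrefl le_rfl hij hjk h)
      (hU.not_symmPart_of_le hrefl le_rfl hij (hjk.trans (le_succ k)) h)
      (hU.symmPart_of_wcovBy hrefl hconn (wcovBy_succ k))).symm

theorem rel_iff_of_le_left [PredOrder α] [IsPredArchimedean α]
    (hU : IsUmbrellaOrder A) (hrefl : ∀ v, A v v)
    (hconn : ∀ u v, ReflTransGen (SymmPart A) u v) (hR : IsInducedRFree A)
    (hs : IsSemicomplete A)
    {i i' j : α} (hi : i' ≤ i) (hij : i ≤ j) (h : ¬ SymmPart A i j) : A i' j ↔ A i j := by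
  induction hi using Pred.rec with
  | rfl => rfl
  | pred k hki ih =>
    rw [← ih]
    exact hR.rel_iff_of_symmPart_left hs
      (hU.not_symmPart_of_le hrefl ((pred_le k).trans hki) hij le_rfl h)
      (hU.not_symmPart_of_le hrefl hki hij le_rfl h)
      (hU.symmPart_of_wcovBy hrefl hconn (pred_wcovBy k))

theorem rel_iff_of_le_of_le [SuccOrder α] [PredOrder α] [IsSuccArchimedean α]
    (hU : IsUmbrellaOrder A) (hrefl : ∀ v, A v v)
    (hconn : ∀ u v, ReflTransGen (SymmPart A) u v) (hR : IsInducedRFree A)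
    (hs : IsSemicomplete A)
    {i j i' j' : α} (hi : i' ≤ i) (hij : i ≤ j) (hj : j ≤ j') (h : ¬ SymmPart A i j) :
    A i' j' ↔ A i j :=
  (hU.rel_iff_of_le_right hrefl hconn hR hs (hi.trans hij) hj
    (hU.not_symmPart_of_le hrefl hi hij le_rfl h)).trans
    (hU.rel_iff_of_le_left hrefl hconn hR hs hi hij h)

theorem rel_iff_rel_of_not_symmPart [SuccOrder α] [PredOrder α] [IsSuccArchimedean α]
    (hU : IsUmbrellaOrder A) (hrefl : ∀ v, A v v)
    (hconn : ∀ u v, ReflTransGen (SymmPart A) u v) (hR : IsInducedRFree A)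
    (hs : IsSemicomplete A) {i j p q : α} (hij : i ≤ j) (hpq : p ≤ q)
    (h : ¬ SymmPart A i j) (h' : ¬ SymmPart A p q) :
    A i j ↔ A p q := by
  rw [← hU.rel_iff_of_le_of_le hrefl hconn hR hs (min_le_left i p) hij (le_max_left j q) h,
    ← hU.rel_iff_of_le_of_le hrefl hconn hR hs (min_le_right i p) hpq (le_max_right j q) h']

end IsUmbrellaOrder

/-- In a reflexive semicomplete digraph with no induced `R`, with
connected symmetric subdigraph, if the ordering `0,...,n-1` is a proper-interval
ordering for the symmetric arcs, then either the ordering or its reversal has the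
property that earlier vertices dominate later vertices. -/
theorem stmt1 {n : ℕ} (A : Fin n → Fin n → Prop)
    (hrefl : ∀ v, A v v)
    (hsemi : ∀ u v : Fin n, u ≠ v → A u v ∨ A v u)
    (hnoR : ¬ ∃ a b c : Fin n, a ≠ b ∧ a ≠ c ∧ b ≠ c ∧
      A a b ∧ A b c ∧ A c a ∧ A a c ∧ ¬ A b a ∧ ¬ A c b)
    (hconn : ∀ u v : Fin n, Relation.ReflTransGen (fun x y => A x y ∧ A y x) u v)
    (horder : ∀ i j k : Fin n, i < j → j < k → (A i k ∧ A k i) →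
      (A i j ∧ A j i) ∧ (A j k ∧ A k j)) :
    (∀ i j : Fin n, i < j → A i j) ∨ (∀ i j : Fin n, i < j → A j i) := by
  by_cases hfwd : ∃ p q, p ≤ q ∧ A p q ∧ ¬ A q p
  · obtain ⟨p, q, hpq, hApq, hAqp⟩ := hfwd
    refine Or.inl fun i j hij => by_contra fun hAij => ?_
    have hU : IsUmbrellaOrder A := horder
    exact hAij ((hU.rel_iff_rel_of_not_symmPart hrefl hconn hnoR hsemi hij.le hpq
      (fun h => hAij h.1) (fun h => hAqp h.2)).mpr hApq)
  · refine Or.inr fun i j hij => by_contra fun hAji => hfwd ?_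
    exact ⟨i, j, hij.le, (hsemi i j hij.ne).resolve_right hAji, hAji⟩
end

section
/- Let H be a reflexive semicomplete digraph containing neither R nor the reflexive 3-cycle C*_3 as an induced subdigraph. Let S and T be two distinct connected components of the symmetric subdigraph H^sym. Then all arcs between S and T are asymmetric and oriented in the same direction: either every vertex of S strictly dominates every vertex of T, or every vertex of T strictly dominates every vertex of S. -/
/-!
Say `x` strictly dominates `y` and `y z` is a symmetric arc. If `x z` is not symmetric, then `z`
cannot dominate `x`: otherwise `z`, `x`, `y` would induce a copy of `R`. By semicompleteness `x`
strictly dominates `z`. So strict domination of `t` by `s` spreads to the whole component of `t`,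
and, since `R` is isomorphic to its converse, dually to the whole component of `s`.
-/

open Relation

section

variable {α : Type*}

def Semicomplete (A : α → α → Prop) : Prop :=
  ∀ u v, u ≠ v → A u v ∨ A v u

def NoInducedR (A : α → α → Prop) : Prop :=
  ¬ ∃ a b c, a ≠ b ∧ a ≠ c ∧ b ≠ c ∧ A a b ∧ A b c ∧ A c a ∧ A a c ∧ ¬ A b a ∧ ¬ A c b

def symPart (A : α → α → Prop) (x y : α) : Prop :=
  A x y ∧ A y x

def StrictlyDominates (A : α → α → Prop) (x y : α) : Prop :=
  A x y ∧ ¬ A y x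

variable {A : α → α → Prop}

theorem Semicomplete.flip (h : Semicomplete A) : Semicomplete (flip A) :=
  fun u v huv => (h u v huv).symm

theorem NoInducedR.flip (h : NoInducedR A) : NoInducedR (flip A) :=
  fun ⟨a, b, c, hab, hac, hbc, h₁, h₂, h₃, h₄, h₅, h₆⟩ =>
    h ⟨c, b, a, hbc.symm, hac.symm, hab.symm, h₂, h₁, h₃, h₄, h₆, h₅⟩

theorem symPart_flip : symPart (flip A) = symPart A := by
  funext x y
  exact propext and_comm

instance : Std.Symm (symPart A) :=
  ⟨fun _ _ h => ⟨h.2, h.1⟩⟩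

theorem reflTransGen_symPart_symm {x y : α} (h : ReflTransGen (symPart A) x y) :
    ReflTransGen (symPart A) y x :=
  Std.Symm.symm _ _ h

theorem ne_and_not_of_not_reflTransGen {r : α → α → Prop} {x y : α}
    (h : ¬ ReflTransGen r x y) : x ≠ y ∧ ¬ r x y :=
  ⟨fun hxy => h (hxy ▸ ReflTransGen.refl), fun hr => h (ReflTransGen.single hr)⟩

theorem StrictlyDominates.of_symPart (hsemi : Semicomplete A) (hnoR : NoInducedR A)
    {x y z : α} (hxy : StrictlyDominates A x y) (hyz : symPart A y z) (hxz : x ≠ z)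
    (hxz' : ¬ symPart A x z) : StrictlyDominates A x z := by
  have hzx : ¬ A z x := by
    intro hzx
    have hzy : z ≠ y := by rintro rfl; exact hxy.2 hzx
    have hxy' : x ≠ y := by rintro rfl; exact hxy.2 hxy.1
    exact hnoR ⟨z, x, y, hxz.symm, hzy, hxy', hzx, hxy.1, hyz.1, hyz.2,
      fun h => hxz' ⟨h, hzx⟩, hxy.2⟩
  exact ⟨(hsemi x z hxz).resolve_right hzx, hzx⟩

theorem StrictlyDominates.of_reflTransGen_right (hsemi : Semicomplete A) (hnoR : NoInducedR A)
    {s t : α} (hst : ¬ ReflTransGen (symPart A) s t) (h : StrictlyDominates A s t)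
    {v : α} (hv : ReflTransGen (symPart A) t v) : StrictlyDominates A s v := by
  induction hv with
  | refl => exact h
  | @tail b c hb hbc ih =>
    have hsc : ¬ ReflTransGen (symPart A) s c := fun hsc =>
      hst (hsc.trans (reflTransGen_symPart_symm (hb.tail hbc)))
    obtain ⟨hsc₁, hsc₂⟩ := ne_and_not_of_not_reflTransGen hsc
    exact ih.of_symPart hsemi hnoR hbc hsc₁ hsc₂

theorem StrictlyDominates.of_reflTransGen_left (hsemi : Semicomplete A) (hnoR : NoInducedR A)
    {s t : α} (hst : ¬ ReflTransGen (symPart A) s t) (h : StrictlyDominates A s t)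
    {u : α} (hu : ReflTransGen (symPart A) s u) : StrictlyDominates A u t := by
  have hts : ¬ ReflTransGen (symPart (flip A)) t s := by
    rw [symPart_flip]
    exact fun hts => hst (reflTransGen_symPart_symm hts)
  rw [← symPart_flip] at hu
  exact of_reflTransGen_right hsemi.flip hnoR.flip hts h hu

theorem StrictlyDominates.of_reflTransGen (hsemi : Semicomplete A) (hnoR : NoInducedR A)
    {s t : α} (hst : ¬ ReflTransGen (symPart A) s t) (h : StrictlyDominates A s t)
    {u v : α} (hu : ReflTransGen (symPart A) s u) (hv : ReflTransGen (symPart A) t v) :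
    StrictlyDominates A u v := by
  have hut : ¬ ReflTransGen (symPart A) u t := fun hut => hst (hu.trans hut)
  exact (h.of_reflTransGen_left hsemi hnoR hst hu).of_reflTransGen_right hsemi hnoR hut hv

end

theorem stmt2_general {n : ℕ} (A : Fin n → Fin n → Prop)
    (hsemi : ∀ u v : Fin n, u ≠ v → A u v ∨ A v u)
    (hnoR : ¬ ∃ a b c : Fin n, a ≠ b ∧ a ≠ c ∧ b ≠ c ∧
      A a b ∧ A b c ∧ A c a ∧ A a c ∧ ¬ A b a ∧ ¬ A c b)
    (s t : Fin n)
    (hst : ¬ Relation.ReflTransGen (fun x y => A x y ∧ A y x) s t) :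
    (∀ u v : Fin n, Relation.ReflTransGen (fun x y => A x y ∧ A y x) s u →
        Relation.ReflTransGen (fun x y => A x y ∧ A y x) t v → A u v ∧ ¬ A v u) ∨
    (∀ u v : Fin n, Relation.ReflTransGen (fun x y => A x y ∧ A y x) s u →
        Relation.ReflTransGen (fun x y => A x y ∧ A y x) t v → A v u ∧ ¬ A u v) := by
  change ¬ ReflTransGen (symPart A) s t at hst
  have hts : ¬ ReflTransGen (symPart A) t s := fun hts => hst (reflTransGen_symPart_symm hts)
  obtain ⟨hne, hnsym⟩ := ne_and_not_of_not_reflTransGen hst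
  rcases hsemi s t hne with hA | hA
  · left
    exact fun u v hu hv =>
      StrictlyDominates.of_reflTransGen hsemi hnoR hst ⟨hA, fun h => hnsym ⟨hA, h⟩⟩ hu hv
  · right
    exact fun u v hu hv =>
      StrictlyDominates.of_reflTransGen hsemi hnoR hts ⟨hA, fun h => hnsym ⟨h, hA⟩⟩ hv hu

/-- In a reflexive semicomplete digraph with no induced `R` and no
induced reflexive 3-cycle, the arcs between two distinct components of the
symmetric subdigraph are all asymmetric and oriented the same way. -/
theorem stmt2 {n : ℕ} (A : Fin n → Fin n → Prop)
    (hrefl : ∀ v, A v v)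
    (hsemi : ∀ u v : Fin n, u ≠ v → A u v ∨ A v u)
    (hnoR : ¬ ∃ a b c : Fin n, a ≠ b ∧ a ≠ c ∧ b ≠ c ∧
      A a b ∧ A b c ∧ A c a ∧ A a c ∧ ¬ A b a ∧ ¬ A c b)
    (hnoC3 : ¬ ∃ a b c : Fin n, a ≠ b ∧ a ≠ c ∧ b ≠ c ∧
      A a b ∧ A b c ∧ A c a ∧ ¬ A b a ∧ ¬ A c b ∧ ¬ A a c)
    (s t : Fin n)
    (hst : ¬ Relation.ReflTransGen (fun x y => A x y ∧ A y x) s t) :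
    (∀ u v : Fin n, Relation.ReflTransGen (fun x y => A x y ∧ A y x) s u →
        Relation.ReflTransGen (fun x y => A x y ∧ A y x) t v → A u v ∧ ¬ A v u) ∨
    (∀ u v : Fin n, Relation.ReflTransGen (fun x y => A x y ∧ A y x) s u →
        Relation.ReflTransGen (fun x y => A x y ∧ A y x) t v → A v u ∧ ¬ A u v) :=
  stmt2_general A hsemi hnoR s t hst
end

section
/- Let H be a reflexive semicomplete digraph containing neither R nor C*_3 as an induced subdigraph, such that the underlying graph of H^sym is a proper interval graph. Then the connected components of H^sym can be linearly ordered H_1, H_2, ..., H_l so that whenever u ∈ H_i, v ∈ H_j and i < j, u strictly dominates v. -/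
/-!
Call `w` a dominator of `u` when `w` strictly dominates `u` and lies in another component of the
symmetric part. Excluding `R` and `C*_3` makes strict domination transitive and makes it
insensitive to moving either endpoint along a symmetric arc; as the digraph is semicomplete, any
two components are then comparable, with all arcs between them strict and in one direction.
Hence the number of dominators is constant on components and strictly increases from an earlier
component to a later one, so it is the required labeling.
-/

namespace SemicompleteDigraph

variable {V : Type*} {A : V → V → Prop} {u v w : V}

def StrictDom (A : V → V → Prop) (u v : V) : Prop := A u v ∧ ¬ A v u

/-- Lying in the same connected component of the symmetric part `H^sym`. -/
abbrev SymmReach (A : V → V → Prop) : V → V → Prop :=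
  Relation.ReflTransGen fun x y => A x y ∧ A y x

def HasInducedR (A : V → V → Prop) : Prop :=
  ∃ a b c : V, a ≠ b ∧ a ≠ c ∧ b ≠ c ∧
    A a b ∧ A b c ∧ A c a ∧ A a c ∧ ¬ A b a ∧ ¬ A c b

def HasInducedC3 (A : V → V → Prop) : Prop :=
  ∃ a b c : V, a ≠ b ∧ a ≠ c ∧ b ≠ c ∧
    A a b ∧ A b c ∧ A c a ∧ ¬ A b a ∧ ¬ A c b ∧ ¬ A a c

def dominators (A : V → V → Prop) (u : V) : Set V :=
  {w | ¬ SymmReach A w u ∧ StrictDom A w u}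

lemma StrictDom.ne (hrefl : ∀ v, A v v) (h : StrictDom A u v) : u ≠ v := by
  rintro rfl
  exact h.2 (hrefl u)

lemma StrictDom.not_symm (h : StrictDom A u v) : ¬ StrictDom A v u :=
  fun h' => h.2 h'.1

lemma symmReach_symm (h : SymmReach A u v) : SymmReach A v u :=
  have : Std.Symm fun x y : V => A x y ∧ A y x := ⟨fun _ _ => And.symm⟩
  Std.Symm.symm _ _ h

lemma strictDom_or_strictDom_of_not_symmReach (hsemi : ∀ u v : V, u ≠ v → A u v ∨ A v u)
    (h : ¬ SymmReach A u v) : StrictDom A u v ∨ StrictDom A v u := by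
  have hne : u ≠ v := by
    rintro rfl
    exact h .refl
  have hnsymm : ¬ (A u v ∧ A v u) := fun huv => h (.single huv)
  rcases hsemi u v hne with huv | hvu
  · exact .inl ⟨huv, fun hvu => hnsymm ⟨huv, hvu⟩⟩
  · exact .inr ⟨hvu, fun huv => hnsymm ⟨huv, hvu⟩⟩

/-- Without an induced `R` or `C*_3`, the arc between the ends of a strict path `u → v → w`
must point from `u` to `w`, and cannot be symmetric. -/
lemma StrictDom.trans (hrefl : ∀ v, A v v) (hsemi : ∀ u v : V, u ≠ v → A u v ∨ A v u)
    (hR : ¬ HasInducedR A) (hC3 : ¬ HasInducedC3 A)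
    (huv : StrictDom A u v) (hvw : StrictDom A v w) : StrictDom A u w := by
  have huw : u ≠ w := by
    rintro rfl
    exact huv.not_symm hvw
  by_cases hwu : A w u
  · by_cases hAuw : A u w
    · exact (hR ⟨u, v, w, huv.ne hrefl, huw, hvw.ne hrefl, huv.1, hvw.1, hwu, hAuw,
        huv.2, hvw.2⟩).elim
    · exact (hC3 ⟨u, v, w, huv.ne hrefl, huw, hvw.ne hrefl, huv.1, hvw.1, hwu, huv.2,
        hvw.2, hAuw⟩).elim
  · exact ⟨(hsemi u w huw).resolve_right hwu, hwu⟩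

lemma strictDom_of_symm_left (hsemi : ∀ u v : V, u ≠ v → A u v ∨ A v u)
    (hR : ¬ HasInducedR A) {u' : V} (hS : A u u' ∧ A u' u) (hn : ¬ SymmReach A u' v)
    (h : StrictDom A u v) : StrictDom A u' v := by
  refine (strictDom_or_strictDom_of_not_symmReach hsemi hn).resolve_right fun h' => hR ?_
  have hne : u ≠ v := by
    rintro rfl
    exact hn (.single hS.symm)
  have hne' : u' ≠ v := by
    rintro rfl
    exact hn .refl
  refine ⟨u, v, u', hne, ?_, hne'.symm, h.1, h'.1, hS.2, hS.1, h.2, h'.2⟩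
  rintro rfl
  exact h.not_symm h'

lemma strictDom_of_symm_right (hsemi : ∀ u v : V, u ≠ v → A u v ∨ A v u)
    (hR : ¬ HasInducedR A) {v' : V} (hS : A v v' ∧ A v' v) (hn : ¬ SymmReach A u v')
    (h : StrictDom A u v) : StrictDom A u v' := by
  refine (strictDom_or_strictDom_of_not_symmReach hsemi hn).resolve_right fun h' => hR ?_
  have hne : u ≠ v := by
    rintro rfl
    exact hn (.single hS)
  have hne' : u ≠ v' := by
    rintro rfl
    exact hn .refl
  refine ⟨v', u, v, hne'.symm, ?_, hne, h'.1, h.1, hS.1, hS.2, h'.2, h.2⟩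
  rintro rfl
  exact h.not_symm h'

lemma strictDom_of_symmReach_left (hsemi : ∀ u v : V, u ≠ v → A u v ∨ A v u)
    (hR : ¬ HasInducedR A) {u' : V} (hu : SymmReach A u u') (hn : ¬ SymmReach A u v)
    (h : StrictDom A u v) : StrictDom A u' v := by
  induction hu with
  | refl => exact h
  | tail hub hbc ih =>
    exact strictDom_of_symm_left hsemi hR hbc
      (fun hcv => hn ((hub.tail hbc).trans hcv)) ih

lemma strictDom_of_symmReach_right (hsemi : ∀ u v : V, u ≠ v → A u v ∨ A v u)
    (hR : ¬ HasInducedR A) {v' : V} (hv : SymmReach A v v') (hn : ¬ SymmReach A u v)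
    (h : StrictDom A u v) : StrictDom A u v' := by
  induction hv with
  | refl => exact h
  | tail hvb hbc ih =>
    exact strictDom_of_symm_right hsemi hR hbc
      (fun huc => hn (huc.trans (symmReach_symm (hvb.tail hbc)))) ih

lemma dominators_eq_of_symmReach (hsemi : ∀ u v : V, u ≠ v → A u v ∨ A v u)
    (hR : ¬ HasInducedR A) (h : SymmReach A u v) : dominators A u = dominators A v := by
  suffices key : ∀ u v, SymmReach A u v → dominators A u ⊆ dominators A v from
    (key u v h).antisymm (key v u (symmReach_symm h))
  intro u v huv w ⟨hwu, hdom⟩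
  exact ⟨fun hwv => hwu (hwv.trans (symmReach_symm huv)),
    strictDom_of_symmReach_right hsemi hR huv hwu hdom⟩

lemma dominators_ssubset (hrefl : ∀ v, A v v) (hsemi : ∀ u v : V, u ≠ v → A u v ∨ A v u)
    (hR : ¬ HasInducedR A) (hC3 : ¬ HasInducedC3 A) (hn : ¬ SymmReach A u v)
    (h : StrictDom A u v) : dominators A u ⊂ dominators A v := by
  have hsub : dominators A u ⊆ dominators A v := fun w ⟨hwu, hdom⟩ =>
    ⟨fun hwv => (strictDom_of_symmReach_left hsemi hR hwv hwu hdom).not_symm h,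
      hdom.trans hrefl hsemi hR hC3 h⟩
  exact (Set.ssubset_iff_of_subset hsub).2 ⟨u, ⟨hn, h⟩, fun hu => hu.2.ne hrefl rfl⟩

end SemicompleteDigraph

open SemicompleteDigraph in
theorem stmt3_general {n : ℕ} (A : Fin n → Fin n → Prop)
    (hrefl : ∀ v, A v v)
    (hsemi : ∀ u v : Fin n, u ≠ v → A u v ∨ A v u)
    (hnoR : ¬ ∃ a b c : Fin n, a ≠ b ∧ a ≠ c ∧ b ≠ c ∧
      A a b ∧ A b c ∧ A c a ∧ A a c ∧ ¬ A b a ∧ ¬ A c b)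
    (hnoC3 : ¬ ∃ a b c : Fin n, a ≠ b ∧ a ≠ c ∧ b ≠ c ∧
      A a b ∧ A b c ∧ A c a ∧ ¬ A b a ∧ ¬ A c b ∧ ¬ A a c) :
    ∃ φ : Fin n → ℕ,
      (∀ u v : Fin n,
        Relation.ReflTransGen (fun x y => A x y ∧ A y x) u v ↔ φ u = φ v) ∧
      (∀ u v : Fin n, φ u < φ v → A u v ∧ ¬ A v u) := by
  have hlt : ∀ u v, ¬ SymmReach A u v → StrictDom A u v →
      (dominators A u).ncard < (dominators A v).ncard := fun u v hn h =>
    Set.ncard_lt_ncard (dominators_ssubset hrefl hsemi hnoR hnoC3 hn h)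
  refine ⟨fun u => (dominators A u).ncard, fun u v => ⟨fun h => ?_, fun h => ?_⟩, fun u v h => ?_⟩
  · exact congrArg Set.ncard (dominators_eq_of_symmReach hsemi hnoR h)
  · by_contra hn
    rcases strictDom_or_strictDom_of_not_symmReach hsemi hn with huv | hvu
    · exact (hlt u v hn huv).ne h
    · exact (hlt v u (fun hvu => hn (symmReach_symm hvu)) hvu).ne' h
  · by_cases hr : SymmReach A u v
    · exact absurd (congrArg Set.ncard (dominators_eq_of_symmReach hsemi hnoR hr)) h.ne
    · exact (strictDom_or_strictDom_of_not_symmReach hsemi hr).resolve_right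
        fun hvu => (hlt v u (fun hvu => hr (symmReach_symm hvu)) hvu).not_gt h

/-- In a reflexive semicomplete digraph with no induced `R`, no induced
reflexive 3-cycle, and whose symmetric subdigraph has proper interval underlying
graph, the components of the symmetric subdigraph can be linearly ordered so that
every vertex of an earlier component strictly dominates every vertex of a later one.
The component structure is encoded by a labeling `φ` constant exactly on components. -/
theorem stmt3 {n : ℕ} (A : Fin n → Fin n → Prop)
    (hrefl : ∀ v, A v v)
    (hsemi : ∀ u v : Fin n, u ≠ v → A u v ∨ A v u)
    (hnoR : ¬ ∃ a b c : Fin n, a ≠ b ∧ a ≠ c ∧ b ≠ c ∧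
      A a b ∧ A b c ∧ A c a ∧ A a c ∧ ¬ A b a ∧ ¬ A c b)
    (hnoC3 : ¬ ∃ a b c : Fin n, a ≠ b ∧ a ≠ c ∧ b ≠ c ∧
      A a b ∧ A b c ∧ A c a ∧ ¬ A b a ∧ ¬ A c b ∧ ¬ A a c)
    (hpin : ∃ σ : Equiv.Perm (Fin n), ∀ i j k : Fin n, i < j → j < k →
      (A (σ i) (σ k) ∧ A (σ k) (σ i)) →
      (A (σ i) (σ j) ∧ A (σ j) (σ i)) ∧ (A (σ j) (σ k) ∧ A (σ k) (σ j))) :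
    ∃ φ : Fin n → ℕ,
      (∀ u v : Fin n,
        Relation.ReflTransGen (fun x y => A x y ∧ A y x) u v ↔ φ u = φ v) ∧
      (∀ u v : Fin n, φ u < φ v → A u v ∧ ¬ A v u) :=
  stmt3_general A hrefl hsemi hnoR hnoC3
end

section
/- Let H be a reflexive semicomplete digraph containing neither R nor C*_3 as an induced subdigraph, such that the underlying graph of H^sym is a proper interval graph. Then H has a Min-Max ordering: an ordering v_1,...,v_n of V(H) such that for any two arcs v_i v_k and v_j v_s of H, both v_{min(i,j)} v_{min(k,s)} and v_{max(i,j)} v_{max(k,s)} are arcs of H. -/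
/-!
Relabel the vertices along the proper interval ordering of `H^sym`. Excluding `R` and `C*_3`
makes asymmetric arcs transitive, so an asymmetric arc can be slid along symmetric arcs as long
as its moving end never becomes symmetrically adjacent to its fixed end. With the umbrella property of the ordering this shows that inside
one component of `H^sym` all asymmetric arcs point the same way, and that between two components
all of them point from the one to the other. Traversing each component in the direction of its
asymmetric arcs, and the components in the order given by the arcs between them, yields a linear
order in which every asymmetric arc points forward and `H^sym` is still umbrella-free; for a
reflexive semicomplete digraph such an order is a Min-Max ordering.
-/

open Relation Set

namespace MinMax

variable {α : Type*}

section Arcs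

variable (A : α → α → Prop)

def SymArc (u v : α) : Prop := A u v ∧ A v u

def AsymArc (u v : α) : Prop := A u v ∧ ¬ A v u

def SymConn : α → α → Prop := ReflTransGen (SymArc A)

def AsymTransitive : Prop := ∀ ⦃a b c⦄, AsymArc A a b → AsymArc A b c → AsymArc A a c

def HasInducedR : Prop := ∃ a b c : α, a ≠ b ∧ a ≠ c ∧ b ≠ c ∧
  A a b ∧ A b c ∧ A c a ∧ A a c ∧ ¬ A b a ∧ ¬ A c b

def HasInducedC3 : Prop := ∃ a b c : α, a ≠ b ∧ a ≠ c ∧ b ≠ c ∧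
  A a b ∧ A b c ∧ A c a ∧ ¬ A b a ∧ ¬ A c b ∧ ¬ A a c

variable {A}

theorem SymArc.symm {u v : α} (h : SymArc A u v) : SymArc A v u := ⟨h.2, h.1⟩

theorem symArc_self (htot : ∀ u v, A u v ∨ A v u) (u : α) : SymArc A u u :=
  have h : A u u := (htot u u).elim id id
  ⟨h, h⟩

theorem SymConn.symm {u v : α} (h : SymConn A u v) : SymConn A v u := by
  induction h with
  | refl => exact ReflTransGen.refl
  | tail _ e ih => exact ReflTransGen.head e.symm ih

theorem SymConn.trans {u v w : α} (h₁ : SymConn A u v) (h₂ : SymConn A v w) : SymConn A u w :=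
  ReflTransGen.trans h₁ h₂

theorem SymArc.symConn {u v : α} (h : SymArc A u v) : SymConn A u v := ReflTransGen.single h

theorem AsymArc.ne {u v : α} (h : AsymArc A u v) : u ≠ v := fun he => h.2 (he ▸ h.1)

theorem AsymArc.not_symArc {u v : α} (h : AsymArc A u v) : ¬ SymArc A u v := fun he => h.2 he.2

theorem asymTransitive_of_not_hasInducedR_of_not_hasInducedC3 (htot : ∀ u v, A u v ∨ A v u)
    (hR : ¬ HasInducedR A) (hC3 : ¬ HasInducedC3 A) : AsymTransitive A := by
  intro a b c hab hbc
  have hac : a ≠ c := by rintro rfl; exact hab.2 hbc.1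
  have hca : ¬ A c a := fun hca => by
    by_cases hac' : A a c
    · exact hR ⟨a, b, c, hab.ne, hac, hbc.ne, hab.1, hbc.1, hca, hac', hab.2, hbc.2⟩
    · exact hC3 ⟨a, b, c, hab.ne, hac, hbc.ne, hab.1, hbc.1, hca, hab.2, hbc.2, hac'⟩
  exact ⟨(htot a c).resolve_right hca, hca⟩

theorem AsymArc.trans_symArc (htot : ∀ u v, A u v ∨ A v u) (htrans : AsymTransitive A)
    {a b c : α} (hab : AsymArc A a b) (hbc : SymArc A b c) (hac : ¬ SymArc A a c) :
    AsymArc A a c := by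
  by_cases hca : A c a
  · exact absurd hbc.1 (htrans ⟨hca, fun h => hac ⟨h, hca⟩⟩ hab).2
  · exact ⟨(htot a c).resolve_right hca, hca⟩

theorem AsymArc.symArc_trans (htot : ∀ u v, A u v ∨ A v u) (htrans : AsymTransitive A)
    {a b c : α} (hab : SymArc A a b) (hbc : AsymArc A b c) (hac : ¬ SymArc A a c) :
    AsymArc A a c := by
  by_cases hca : A c a
  · exact absurd hab.1 (htrans hbc ⟨hca, fun h => hac ⟨h, hca⟩⟩).2
  · exact ⟨(htot a c).resolve_right hca, hca⟩

theorem AsymArc.slide_head (htot : ∀ u v, A u v ∨ A v u) (htrans : AsymTransitive A)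
    {S : Set α} {a x y : α} (h : AsymArc A a x)
    (hxy : ReflTransGen (fun u v => SymArc A u v ∧ v ∈ S) x y)
    (hS : ∀ z ∈ S, ¬ SymArc A a z) : AsymArc A a y := by
  induction hxy with
  | refl => exact h
  | tail _ e ih => exact ih.trans_symArc htot htrans e.1 (hS _ e.2)

theorem AsymArc.slide_tail (htot : ∀ u v, A u v ∨ A v u) (htrans : AsymTransitive A)
    {S : Set α} {b x y : α} (h : AsymArc A x b)
    (hxy : ReflTransGen (fun u v => SymArc A u v ∧ v ∈ S) x y)
    (hS : ∀ z ∈ S, ¬ SymArc A z b) : AsymArc A y b := by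
  induction hxy with
  | refl => exact h
  | tail _ e ih => exact AsymArc.symArc_trans htot htrans e.1.symm ih (hS _ e.2)

theorem AsymArc.slide_head_of_not_symConn (htot : ∀ u v, A u v ∨ A v u)
    (htrans : AsymTransitive A) {a x y : α} (h : AsymArc A a x) (hax : ¬ SymConn A a x)
    (hxy : SymConn A x y) : AsymArc A a y := by
  induction hxy with
  | refl => exact h
  | tail hxc e ih =>
    exact ih.trans_symArc htot htrans e fun he =>
      hax (he.symConn.trans (SymConn.symm (hxc.tail e)))

theorem AsymArc.slide_tail_of_not_symConn (htot : ∀ u v, A u v ∨ A v u)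
    (htrans : AsymTransitive A) {b x y : α} (h : AsymArc A x b) (hxb : ¬ SymConn A x b)
    (hxy : SymConn A x y) : AsymArc A y b := by
  induction hxy with
  | refl => exact h
  | tail hxc e ih =>
    exact AsymArc.symArc_trans htot htrans e.symm ih fun he =>
      hxb ((hxc.tail e).trans he.symConn)

end Arcs

section Order

variable [LinearOrder α] (A : α → α → Prop)

def IsUmbrellaFree : Prop :=
  ∀ i j k : α, i < j → j < k → SymArc A i k → SymArc A i j ∧ SymArc A j k

def HasBackwardArc (u : α) : Prop :=
  ∃ p q, SymConn A u p ∧ SymConn A u q ∧ q < p ∧ AsymArc A p q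

def ArcLT (u v : α) : Prop :=
  (SymConn A u v ∧ (HasBackwardArc A u ∧ v < u ∨ ¬ HasBackwardArc A u ∧ u < v)) ∨
    (¬ SymConn A u v ∧ AsymArc A u v)

def IsMinMax : Prop :=
  ∀ i k j s : α, A i k → A j s → A (min i j) (min k s) ∧ A (max i j) (max k s)

variable {A}

theorem IsUmbrellaFree.symArc_of_le_of_lt_of_le (humb : IsUmbrellaFree A) {p q x y : α}
    (h : SymArc A p q) (hpx : p ≤ x) (hxy : x < y) (hyq : y ≤ q) : SymArc A x y := by
  have hxq : SymArc A x q := by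
    rcases hpx.eq_or_lt with rfl | hpx
    · exact h
    · exact (humb p x q hpx (hxy.trans_le hyq) h).2
  rcases hyq.eq_or_lt with rfl | hyq
  · exact hxq
  · exact (humb x y q hxy hyq hxq).1

theorem IsUmbrellaFree.symArc_projIcc (htot : ∀ u v, A u v ∨ A v u) (humb : IsUmbrellaFree A)
    {s t : α} (hst : s ≤ t) {a b : α} (h : SymArc A a b) :
    SymArc A (projIcc s t hst a) (projIcc s t hst b) := by
  wlog hab : a ≤ b generalizing a b
  · exact (this h.symm (le_of_not_ge hab)).symm
  rcases (monotone_projIcc hst hab).eq_or_lt with heq | hlt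
  · rw [heq]; exact symArc_self htot _
  have ha : a ≤ projIcc s t hst a := by
    rcases le_or_gt a t with hat | hta
    · exact le_max_of_le_right (le_min hat le_rfl)
    · rw [projIcc_of_right_le hst hta.le] at hlt
      exact absurd (projIcc s t hst b).2.2 hlt.not_ge
  have hb : projIcc s t hst b ≤ b := by
    rcases le_or_gt s b with hsb | hbs
    · exact max_le hsb (min_le_right _ _)
    · rw [projIcc_of_le_left hst hbs.le] at hlt
      exact absurd (projIcc s t hst a).2.1 hlt.not_ge
  exact humb.symArc_of_le_of_lt_of_le h ha hlt hb

theorem SymConn.reflTransGen_uIcc (htot : ∀ u v, A u v ∨ A v u) (humb : IsUmbrellaFree A)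
    {x y : α} (h : SymConn A x y) :
    ReflTransGen (fun u v => SymArc A u v ∧ v ∈ uIcc x y) x y := by
  let f (z : α) : α := projIcc (x ⊓ y) (x ⊔ y) inf_le_sup z
  have hf : ReflTransGen (fun u v => SymArc A u v ∧ v ∈ uIcc x y) (f x) (f y) :=
    ReflTransGen.lift f
      (fun a b hab => ⟨humb.symArc_projIcc htot _ hab, (projIcc _ _ _ b).2⟩) x y h
  rwa [show f x = x by simp [f, projIcc_of_mem _ left_mem_uIcc],
    show f y = y by simp [f, projIcc_of_mem _ right_mem_uIcc]] at hf

theorem not_asymArc_of_asymArc_of_symConn (htot : ∀ u v, A u v ∨ A v u)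
    (htrans : AsymTransitive A) (humb : IsUmbrellaFree A) {p q u w : α}
    (hpq : AsymArc A p q) (hqp : q < p) (huw : u < w) (hwp : SymConn A w p)
    (huq : SymConn A u q) : ¬ AsymArc A u w := by
  -- slide the forward arc `u → w` along `w ~ p` and `u ~ q` until it becomes `q → p`
  intro how
  have hu : ∀ z, w ≤ z → ¬ SymArc A u z := fun z hz he =>
    how.not_symArc (humb.symArc_of_le_of_lt_of_le he le_rfl huw hz)
  have hq : ∀ z, p ≤ z → ¬ SymArc A q z := fun z hz he =>
    hpq.not_symArc (humb.symArc_of_le_of_lt_of_le he le_rfl hqp hz).symm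
  have below : ∀ t, u < t → q < t → ¬ SymArc A u t → ¬ SymArc A q t →
      ∀ z ∈ uIcc u q, ¬ SymArc A z t := by
    intro t hut hqt hnu hnq z hz he
    rcases mem_uIcc.1 hz with ⟨-, hzq⟩ | ⟨-, hzu⟩
    · exact hnq (humb.symArc_of_le_of_lt_of_le he hzq hqt le_rfl)
    · exact hnu (humb.symArc_of_le_of_lt_of_le he hzu hut le_rfl)
  have pwp := hwp.reflTransGen_uIcc htot humb
  have puq := huq.reflTransGen_uIcc htot humb
  rcases le_total w p with hle | hle
  · have hup : AsymArc A u p := how.slide_head htot htrans pwp fun z hz =>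
      hu z (by rw [uIcc_of_le hle] at hz; exact hz.1)
    have hqp' : AsymArc A q p := hup.slide_tail htot htrans puq
      (below p (huw.trans_le hle) hqp hup.not_symArc fun h => hpq.not_symArc h.symm)
    exact hpq.2 hqp'.1
  · have hqw : AsymArc A q w := how.slide_tail htot htrans puq
      (below w huw (hqp.trans_le hle) how.not_symArc (hq w hle))
    have hqp' : AsymArc A q p := hqw.slide_head htot htrans pwp fun z hz =>
      hq z (by rw [uIcc_of_ge hle] at hz; exact hz.1)
    exact hpq.2 hqp'.1

theorem SymConn.hasBackwardArc_iff {u v : α} (h : SymConn A u v) :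
    HasBackwardArc A u ↔ HasBackwardArc A v :=
  ⟨fun ⟨p, q, hp, hq, hqp, hpq⟩ => ⟨p, q, h.symm.trans hp, h.symm.trans hq, hqp, hpq⟩,
    fun ⟨p, q, hp, hq, hqp, hpq⟩ => ⟨p, q, h.trans hp, h.trans hq, hqp, hpq⟩⟩

theorem arcLT_of_asymArc (htot : ∀ u v, A u v ∨ A v u) (htrans : AsymTransitive A)
    (humb : IsUmbrellaFree A) {u v : α} (h : AsymArc A u v) : ArcLT A u v := by
  by_cases hc : SymConn A u v
  · refine Or.inl ⟨hc, ?_⟩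
    by_cases hb : HasBackwardArc A u
    · obtain ⟨p, q, hup, huq, hqp, hpq⟩ := hb
      refine Or.inl ⟨⟨p, q, hup, huq, hqp, hpq⟩, lt_of_not_ge fun hle => ?_⟩
      exact not_asymArc_of_asymArc_of_symConn htot htrans humb hpq hqp
        (hle.lt_of_ne h.ne) (hc.symm.trans hup) huq h
    · exact Or.inr ⟨hb, lt_of_not_ge fun hle =>
        hb ⟨u, v, ReflTransGen.refl, hc, hle.lt_of_ne h.ne.symm, h⟩⟩
  · exact Or.inr ⟨hc, h⟩

theorem arcLT_irrefl (u : α) : ¬ ArcLT A u u := by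
  rintro (⟨-, ⟨-, h⟩ | ⟨-, h⟩⟩ | ⟨h, -⟩)
  · exact h.false
  · exact h.false
  · exact h ReflTransGen.refl

theorem arcLT_trans (htot : ∀ u v, A u v ∨ A v u) (htrans : AsymTransitive A)
    (humb : IsUmbrellaFree A) {u v w : α} (huv : ArcLT A u v) (hvw : ArcLT A v w) :
    ArcLT A u w := by
  rcases huv with ⟨cuv, huv⟩ | ⟨ncuv, auv⟩ <;> rcases hvw with ⟨cvw, hvw⟩ | ⟨ncvw, avw⟩
  · rw [← cuv.hasBackwardArc_iff] at hvw
    refine Or.inl ⟨cuv.trans cvw, ?_⟩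
    rcases huv with ⟨hb, huv⟩ | ⟨hb, huv⟩ <;> rcases hvw with ⟨hb', hvw⟩ | ⟨hb', hvw⟩
    · exact Or.inl ⟨hb, hvw.trans huv⟩
    · exact absurd hb hb'
    · exact absurd hb' hb
    · exact Or.inr ⟨hb, huv.trans hvw⟩
  · exact Or.inr ⟨fun h => ncvw (cuv.symm.trans h),
      avw.slide_tail_of_not_symConn htot htrans ncvw cuv.symm⟩
  · exact Or.inr ⟨fun h => ncuv (h.trans cvw.symm),
      auv.slide_head_of_not_symConn htot htrans ncuv cvw⟩
  · exact arcLT_of_asymArc htot htrans humb (htrans auv avw)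

theorem eq_of_not_arcLT_of_not_arcLT (htot : ∀ u v, A u v ∨ A v u) {u v : α}
    (huv : ¬ ArcLT A u v) (hvu : ¬ ArcLT A v u) : u = v := by
  by_contra hne
  by_cases hc : SymConn A u v
  · have hb := hc.hasBackwardArc_iff
    by_cases hbu : HasBackwardArc A u <;> rcases lt_or_gt_of_ne hne with h | h
    · exact hvu (Or.inl ⟨hc.symm, Or.inl ⟨hb.1 hbu, h⟩⟩)
    · exact huv (Or.inl ⟨hc, Or.inl ⟨hbu, h⟩⟩)
    · exact huv (Or.inl ⟨hc, Or.inr ⟨hbu, h⟩⟩)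
    · exact hvu (Or.inl ⟨hc.symm, Or.inr ⟨mt hb.2 hbu, h⟩⟩)
  · have hns : ¬ SymArc A u v := fun h => hc h.symConn
    rcases htot u v with h | h
    · exact huv (Or.inr ⟨hc, h, fun h' => hns ⟨h, h'⟩⟩)
    · exact hvu (Or.inr ⟨fun h' => hc h'.symm, h, fun h' => hns ⟨h', h⟩⟩)

theorem isStrictTotalOrder_arcLT (htot : ∀ u v, A u v ∨ A v u) (htrans : AsymTransitive A)
    (humb : IsUmbrellaFree A) : IsStrictTotalOrder α (ArcLT A) where
  irrefl := arcLT_irrefl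
  trans _ _ _ := arcLT_trans htot htrans humb
  trichotomous _ _ := eq_of_not_arcLT_of_not_arcLT htot

theorem symArc_of_arcLT (htrans : AsymTransitive A) (humb : IsUmbrellaFree A) {u v w : α}
    (huv : ArcLT A u v) (hvw : ArcLT A v w) (huw : SymArc A u w) : SymArc A u v ∧ SymArc A v w := by
  have cuv : SymConn A u v := by
    by_contra ncuv
    have auv : AsymArc A u v := (huv.resolve_left fun h => ncuv h.1).2
    have avw : AsymArc A v w :=
      (hvw.resolve_left fun h => ncuv (huw.symConn.trans h.1.symm)).2
    exact (htrans auv avw).not_symArc huw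
  have hb := cuv.hasBackwardArc_iff
  obtain ⟨-, huv⟩ := huv.resolve_right fun h => h.1 cuv
  obtain ⟨-, hvw⟩ := hvw.resolve_right fun h => h.1 (cuv.symm.trans huw.symConn)
  rcases huv with ⟨hbu, huv⟩ | ⟨hbu, huv⟩ <;> rcases hvw with ⟨hbv, hvw⟩ | ⟨hbv, hvw⟩
  · have h := humb w v u hvw huv huw.symm
    exact ⟨h.2.symm, h.1.symm⟩
  · exact absurd (hb.1 hbu) hbv
  · exact absurd (hb.2 hbv) hbu
  · exact humb u v w huv hvw huw

theorem symArc_of_lt_of_asymArc_lt (hfwd : ∀ x y, AsymArc A x y → x < y) {x y : α}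
    (hxy : A y x) (hlt : x < y) : SymArc A x y :=
  ⟨by_contra fun h => (hfwd y x ⟨hxy, h⟩).asymm hlt, hxy⟩

theorem arc_min_max_of_le (htot : ∀ u v, A u v ∨ A v u)
    (hfwd : ∀ x y, AsymArc A x y → x < y) (humb : IsUmbrellaFree A) {i j k s : α}
    (hij : i ≤ j) (hik : A i k) (hjs : A j s) : A i (min k s) ∧ A j (max k s) := by
  constructor
  · rcases le_total k s with hks | hsk
    · rwa [min_eq_left hks]
    rw [min_eq_right hsk]
    by_contra his
    have hsi : s < i := hfwd s i ⟨(htot i s).resolve_left his, his⟩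
    exact his (humb.symArc_of_le_of_lt_of_le
      (symArc_of_lt_of_asymArc_lt hfwd hjs (hsi.trans_le hij)) le_rfl hsi hij).2
  · rcases le_total k s with hks | hsk
    · rwa [max_eq_right hks]
    rw [max_eq_left hsk]
    by_contra hjk
    have hkj : k < j := hfwd k j ⟨(htot j k).resolve_left hjk, hjk⟩
    exact hjk (humb.symArc_of_le_of_lt_of_le
      (symArc_of_lt_of_asymArc_lt hfwd hjs (hsk.trans_lt hkj)) hsk hkj le_rfl).2

theorem isMinMax_of_asymArc_lt (htot : ∀ u v, A u v ∨ A v u)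
    (hfwd : ∀ x y, AsymArc A x y → x < y) (humb : IsUmbrellaFree A) : IsMinMax A := by
  intro i k j s hik hjs
  rcases le_total i j with hij | hji
  · rw [min_eq_left hij, max_eq_right hij]
    exact arc_min_max_of_le htot hfwd humb hij hik hjs
  · rw [min_eq_right hji, max_eq_left hji, min_comm k, max_comm k]
    exact arc_min_max_of_le htot hfwd humb hji hjs hik

theorem isMinMax_of_strictMono_arcLT {β : Type*} [LinearOrder β] (htot : ∀ u v, A u v ∨ A v u)
    (htrans : AsymTransitive A) (humb : IsUmbrellaFree A) {τ : β → α}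
    (hτ : ∀ i j, i < j → ArcLT A (τ i) (τ j)) : IsMinMax fun x y => A (τ x) (τ y) := by
  refine isMinMax_of_asymArc_lt (fun x y => htot _ _)
    (fun x y hxy => lt_of_not_ge fun hyx => ?_)
    (fun i j k hij hjk => symArc_of_arcLT htrans humb (hτ i j hij) (hτ j k hjk))
  have hlt := arcLT_of_asymArc htot htrans humb hxy
  rcases hyx.eq_or_lt with rfl | hyx
  · exact arcLT_irrefl _ hlt
  · exact arcLT_irrefl _ (arcLT_trans htot htrans humb hlt (hτ y x hyx))

end Order

theorem exists_perm_lt_of_isStrictTotalOrder {n : ℕ} (r : Fin n → Fin n → Prop)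
    [IsStrictTotalOrder (Fin n) r] : ∃ τ : Equiv.Perm (Fin n), ∀ i j, i < j → r (τ i) (τ j) := by
  classical
  let e := @monoEquivOfFin (Fin n) _ (linearOrderOfSTO r) n (by simp)
  exact ⟨e.toEquiv, fun i j hij =>
    @OrderIso.strictMono _ _ _ (linearOrderOfSTO r).toPreorder e i j hij⟩

end MinMax

open MinMax

/-- A reflexive semicomplete digraph with no induced `R`, no induced
reflexive 3-cycle, and proper interval underlying graph of its symmetric subdigraph,
has a Min-Max ordering. -/
theorem stmt5 {n : ℕ} (A : Fin n → Fin n → Prop)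
    (hrefl : ∀ v, A v v)
    (hsemi : ∀ u v : Fin n, u ≠ v → A u v ∨ A v u)
    (hnoR : ¬ ∃ a b c : Fin n, a ≠ b ∧ a ≠ c ∧ b ≠ c ∧
      A a b ∧ A b c ∧ A c a ∧ A a c ∧ ¬ A b a ∧ ¬ A c b)
    (hnoC3 : ¬ ∃ a b c : Fin n, a ≠ b ∧ a ≠ c ∧ b ≠ c ∧
      A a b ∧ A b c ∧ A c a ∧ ¬ A b a ∧ ¬ A c b ∧ ¬ A a c)
    (hpin : ∃ σ : Equiv.Perm (Fin n), ∀ i j k : Fin n, i < j → j < k →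
      (A (σ i) (σ k) ∧ A (σ k) (σ i)) →
      (A (σ i) (σ j) ∧ A (σ j) (σ i)) ∧ (A (σ j) (σ k) ∧ A (σ k) (σ j))) :
    ∃ σ : Equiv.Perm (Fin n), ∀ i k j s : Fin n, A (σ i) (σ k) → A (σ j) (σ s) →
      A (σ (min i j)) (σ (min k s)) ∧ A (σ (max i j)) (σ (max k s)) := by
  obtain ⟨σ, humb⟩ := hpin
  have htot (u v : Fin n) : A u v ∨ A v u := by
    rcases eq_or_ne u v with rfl | huv
    · exact Or.inl (hrefl u)
    · exact hsemi u v huv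
  have htrans := asymTransitive_of_not_hasInducedR_of_not_hasInducedC3 htot hnoR hnoC3
  let B (i j : Fin n) : Prop := A (σ i) (σ j)
  have htotB (u v : Fin n) : B u v ∨ B v u := htot _ _
  have htransB : AsymTransitive B := fun a b c => @htrans (σ a) (σ b) (σ c)
  have := isStrictTotalOrder_arcLT htotB htransB humb
  obtain ⟨τ, hτ⟩ := exists_perm_lt_of_isStrictTotalOrder (ArcLT B)
  exact ⟨τ.trans σ, isMinMax_of_strictMono_arcLT htotB htransB humb hτ⟩
end

section
/- A reflexive undirected graph H has a Min-Max ordering if and only if its vertices can be ordered v_1, v_2, ..., v_n so that i < j < k and v_i v_k ∈ E(H) imply v_i v_j ∈ E(H) and v_j v_k ∈ E(H). -/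
/-!
Reading the Min-Max condition with `j = s` a loop shows that an edge `v_i v_k` forces the
edges from every intermediate `v_j` to both ends. Conversely, given two edges `v_i v_k` and
`v_j v_s` with `i ≤ j` and `s < k`, the two required edges `v_i v_s` and `v_j v_k` each join two
vertices nested between the ends of one of the given edges, so the umbrella property
(together with symmetry) supplies them.
-/

section Orderings

variable {α : Type*} [LinearOrder α] (r : α → α → Prop)

def IsMinMaxOrdering : Prop :=
  ∀ i k j s, r i k → r j s → r (min i j) (min k s) ∧ r (max i j) (max k s)

def IsUmbrellaOrdering : Prop :=
  ∀ i j k, i < j → j < k → r i k → r i j ∧ r j k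

variable {r}

theorem IsMinMaxOrdering.isUmbrellaOrdering (hrefl : ∀ a, r a a) (h : IsMinMaxOrdering r) :
    IsUmbrellaOrdering r := by
  intro i j k hij hjk hik
  have := h i k j j hik (hrefl j)
  rwa [min_eq_left hij.le, min_eq_right hjk.le, max_eq_right hij.le,
    max_eq_left hjk.le] at this

namespace IsUmbrellaOrdering

theorem of_le (hrefl : ∀ a, r a a) (h : IsUmbrellaOrdering r) {i j k : α} (hij : i ≤ j)
    (hjk : j ≤ k) (hik : r i k) : r i j ∧ r j k := by
  rcases hij.eq_or_lt with rfl | hij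
  · exact ⟨hrefl i, hik⟩
  rcases hjk.eq_or_lt with rfl | hjk
  · exact ⟨hik, hrefl j⟩
  exact h i j k hij hjk hik

theorem min_max_of_le (hrefl : ∀ a, r a a) (hsymm : ∀ a b, r a b → r b a)
    (h : IsUmbrellaOrdering r) {i j k s : α} (hij : i ≤ j) (hik : r i k) (hjs : r j s) :
    r i (min k s) ∧ r j (max k s) := by
  rcases le_total k s with hks | hsk
  · rw [min_eq_left hks, max_eq_right hks]
    exact ⟨hik, hjs⟩
  rw [min_eq_right hsk, max_eq_left hsk]
  constructor
  · rcases le_total i s with his | hsi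
    · exact (h.of_le hrefl his hsk hik).1
    · exact hsymm _ _ (h.of_le hrefl hsi hij (hsymm _ _ hjs)).1
  · rcases le_total j k with hjk | hkj
    · exact (h.of_le hrefl hij hjk hik).2
    · exact hsymm _ _ (h.of_le hrefl hsk hkj (hsymm _ _ hjs)).2

theorem isMinMaxOrdering (hrefl : ∀ a, r a a) (hsymm : ∀ a b, r a b → r b a)
    (h : IsUmbrellaOrdering r) : IsMinMaxOrdering r := by
  intro i k j s hik hjs
  rcases le_total i j with hij | hji
  · rw [min_eq_left hij, max_eq_right hij]
    exact h.min_max_of_le hrefl hsymm hij hik hjs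
  · rw [min_eq_right hji, max_eq_left hji, min_comm k s, max_comm k s]
    exact h.min_max_of_le hrefl hsymm hji hjs hik

end IsUmbrellaOrdering

theorem isMinMaxOrdering_iff_isUmbrellaOrdering (hrefl : ∀ a, r a a)
    (hsymm : ∀ a b, r a b → r b a) : IsMinMaxOrdering r ↔ IsUmbrellaOrdering r :=
  ⟨(·.isUmbrellaOrdering hrefl), (·.isMinMaxOrdering hrefl hsymm)⟩

end Orderings

/-- A reflexive undirected graph (symmetric reflexive relation `E`)
has a Min-Max ordering iff it has a proper-interval ("umbrella") ordering. -/
theorem stmt6 {n : ℕ} (E : Fin n → Fin n → Prop)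
    (hrefl : ∀ v, E v v)
    (hsym : ∀ u v : Fin n, E u v → E v u) :
    (∃ σ : Equiv.Perm (Fin n), ∀ i k j s : Fin n, E (σ i) (σ k) → E (σ j) (σ s) →
      E (σ (min i j)) (σ (min k s)) ∧ E (σ (max i j)) (σ (max k s))) ↔
    (∃ σ : Equiv.Perm (Fin n), ∀ i j k : Fin n, i < j → j < k → E (σ i) (σ k) →
      E (σ i) (σ j) ∧ E (σ j) (σ k)) :=
  exists_congr fun σ =>
    isMinMaxOrdering_iff_isUmbrellaOrdering (r := fun x y => E (σ x) (σ y))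
      (fun v => hrefl (σ v)) (fun u v => hsym (σ u) (σ v))
end

section
/- Let H be a semicomplete digraph with possible loops, let L be the induced subdigraph on the vertices with loops and I the induced subdigraph on loopless vertices. Suppose H contains no induced copy of W, R', or a directed 3-cycle with at least one loop; L contains neither R nor C*_3 as an induced subdigraph; the underlying graph of L^sym is a proper interval graph; and I is a transitive tournament. Then for every loopless vertex u of I and every connected component S of L^sym, either u strictly dominates every vertex of S, or every vertex of S strictly dominates u. -/
/-!
A loopless vertex `u` and a looped vertex `c` of a semicomplete digraph are joined by exactly
one arc, since a symmetric pair would induce `W`. If `u` strictly dominates `b` and `bc` is an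
arc of `L^sym`, then `u` strictly dominates `c` as well: otherwise `c` strictly dominates `u`,
and `u, b, c` induce `R'`. So strict domination by `u` spreads over each component of `L^sym`.
The other alternative follows by reversing all arcs, because `W` and `R'` are self-converse.
-/

namespace LoopedDigraph

variable {V : Type*} {A : V → V → Prop}

def IsSemicomplete (A : V → V → Prop) : Prop :=
  ∀ u v, u ≠ v → A u v ∨ A v u

def InducesNoW (A : V → V → Prop) : Prop :=
  ¬ ∃ a b, a ≠ b ∧ A a b ∧ A b a ∧ A b b ∧ ¬ A a a

def InducesNoR' (A : V → V → Prop) : Prop :=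
  ¬ ∃ a b c, a ≠ b ∧ a ≠ c ∧ b ≠ c ∧
    A a b ∧ ¬ A b a ∧ A b c ∧ A c b ∧ A c a ∧ ¬ A a c ∧ A b b ∧ A c c ∧ ¬ A a a

def StrictlyDominates (A : V → V → Prop) (x y : V) : Prop :=
  A x y ∧ ¬ A y x

/-- The adjacency of `L^sym`, the symmetric part of the subdigraph induced on looped vertices. -/
def LSymAdj (A : V → V → Prop) (a b : V) : Prop :=
  A a a ∧ A b b ∧ A a b ∧ A b a

theorem IsSemicomplete.flip (h : IsSemicomplete A) : IsSemicomplete (flip A) :=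
  fun u v huv => (h u v huv).symm

theorem InducesNoW.flip (h : InducesNoW A) : InducesNoW (flip A) :=
  fun ⟨a, b, hab, hab', hba, hbb, haa⟩ => h ⟨a, b, hab, hba, hab', hbb, haa⟩

theorem InducesNoR'.flip (h : InducesNoR' A) : InducesNoR' (flip A) :=
  fun ⟨a, b, c, hab, hac, hbc, h₁, h₂, h₃, h₄, h₅, h₆, hbb, hcc, haa⟩ =>
    h ⟨a, c, b, hac, hab, hbc.symm, h₅, h₆, h₃, h₄, h₁, h₂, hcc, hbb, haa⟩

theorem lSymAdj_flip : LSymAdj (flip A) = LSymAdj A := by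
  ext a b
  simp only [LSymAdj, flip, and_comm (a := A b a)]

theorem strictlyDominates_or_of_loop (hsemi : IsSemicomplete A) (hW : InducesNoW A) {u c : V}
    (hu : ¬ A u u) (hc : A c c) : StrictlyDominates A u c ∨ StrictlyDominates A c u := by
  have huc : u ≠ c := by rintro rfl; exact hu hc
  rcases hsemi u c huc with h | h
  · exact Or.inl ⟨h, fun h' => hW ⟨u, c, huc, h, h', hc, hu⟩⟩
  · exact Or.inr ⟨h, fun h' => hW ⟨u, c, huc, h', h, hc, hu⟩⟩

theorem StrictlyDominates.of_lSymAdj (hsemi : IsSemicomplete A) (hW : InducesNoW A)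
    (hR' : InducesNoR' A) {u b c : V} (hu : ¬ A u u) (hub : StrictlyDominates A u b)
    (hbc : LSymAdj A b c) : StrictlyDominates A u c := by
  obtain ⟨hbb, hcc, hbc', hcb⟩ := hbc
  obtain rfl | hne := eq_or_ne b c
  · exact hub
  refine (strictlyDominates_or_of_loop hsemi hW hu hcc).resolve_right fun ⟨hcu, huc⟩ => ?_
  exact hR' ⟨u, b, c, fun h => hu (h ▸ hbb), fun h => hu (h ▸ hcc), hne,
    hub.1, hub.2, hbc', hcb, hcu, huc, hbb, hcc, hu⟩

theorem StrictlyDominates.of_reflTransGen_right (hsemi : IsSemicomplete A) (hW : InducesNoW A)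
    (hR' : InducesNoR' A) {u b c : V} (hu : ¬ A u u) (hub : StrictlyDominates A u b)
    (hbc : Relation.ReflTransGen (LSymAdj A) b c) : StrictlyDominates A u c := by
  induction hbc with
  | refl => exact hub
  | tail _ hcd ih => exact ih.of_lSymAdj hsemi hW hR' hu hcd

theorem StrictlyDominates.of_reflTransGen_left (hsemi : IsSemicomplete A) (hW : InducesNoW A)
    (hR' : InducesNoR' A) {u b c : V} (hu : ¬ A u u) (hbu : StrictlyDominates A b u)
    (hbc : Relation.ReflTransGen (LSymAdj A) b c) : StrictlyDominates A c u :=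
  StrictlyDominates.of_reflTransGen_right (A := flip A) hsemi.flip hW.flip hR'.flip hu hbu
    (lSymAdj_flip (A := A) ▸ hbc)

end LoopedDigraph

open LoopedDigraph in
theorem stmt7_general {n : ℕ} (A : Fin n → Fin n → Prop)
    (hsemi : ∀ u v : Fin n, u ≠ v → A u v ∨ A v u)
    (hnoW : ¬ ∃ a b : Fin n, a ≠ b ∧ A a b ∧ A b a ∧ A b b ∧ ¬ A a a)
    (hnoR' : ¬ ∃ a b c : Fin n, a ≠ b ∧ a ≠ c ∧ b ≠ c ∧
      A a b ∧ ¬ A b a ∧ A b c ∧ A c b ∧ A c a ∧ ¬ A a c ∧ A b b ∧ A c c ∧ ¬ A a a) :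
    ∀ u : Fin n, ¬ A u u → ∀ s : Fin n, A s s →
      (∀ v : Fin n,
        Relation.ReflTransGen (fun a b => A a a ∧ A b b ∧ A a b ∧ A b a) s v →
        A u v ∧ ¬ A v u) ∨
      (∀ v : Fin n,
        Relation.ReflTransGen (fun a b => A a a ∧ A b b ∧ A a b ∧ A b a) s v →
        A v u ∧ ¬ A u v) := by
  intro u hu s hs
  rcases strictlyDominates_or_of_loop hsemi hnoW hu hs with hus | hsu
  · exact Or.inl fun v hv => hus.of_reflTransGen_right hsemi hnoW hnoR' hu hv
  · exact Or.inr fun v hv => hsu.of_reflTransGen_left hsemi hnoW hnoR' hu hv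

/-- In a semicomplete digraph with possible loops satisfying the
polynomiality conditions (no induced W, R', or loopy 3-cycle; reflexive part L with
no induced R or reflexive 3-cycle and proper interval U(L^sym); loopless part I a
transitive tournament), every loopless vertex either strictly dominates a whole
component of L^sym or is strictly dominated by it. -/
theorem stmt7 {n : ℕ} (A : Fin n → Fin n → Prop)
    (hsemi : ∀ u v : Fin n, u ≠ v → A u v ∨ A v u)
    (hnoW : ¬ ∃ a b : Fin n, a ≠ b ∧ A a b ∧ A b a ∧ A b b ∧ ¬ A a a)
    (hnoR' : ¬ ∃ a b c : Fin n, a ≠ b ∧ a ≠ c ∧ b ≠ c ∧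
      A a b ∧ ¬ A b a ∧ A b c ∧ A c b ∧ A c a ∧ ¬ A a c ∧ A b b ∧ A c c ∧ ¬ A a a)
    (hnoC3loop : ¬ ∃ a b c : Fin n, a ≠ b ∧ a ≠ c ∧ b ≠ c ∧
      A a b ∧ A b c ∧ A c a ∧ ¬ A b a ∧ ¬ A c b ∧ ¬ A a c ∧ (A a a ∨ A b b ∨ A c c))
    (hLnoR : ¬ ∃ a b c : Fin n, A a a ∧ A b b ∧ A c c ∧ a ≠ b ∧ a ≠ c ∧ b ≠ c ∧
      A a b ∧ A b c ∧ A c a ∧ A a c ∧ ¬ A b a ∧ ¬ A c b)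
    (hLnoC3 : ¬ ∃ a b c : Fin n, A a a ∧ A b b ∧ A c c ∧ a ≠ b ∧ a ≠ c ∧ b ≠ c ∧
      A a b ∧ A b c ∧ A c a ∧ ¬ A b a ∧ ¬ A c b ∧ ¬ A a c)
    (hpin : ∃ f : Fin n → ℕ, (∀ x y, A x x → A y y → f x = f y → x = y) ∧
      ∀ x y z : Fin n, A x x → A y y → A z z → f x < f y → f y < f z →
        (A x z ∧ A z x) → (A x y ∧ A y x) ∧ (A y z ∧ A z y))
    (hItour : ∀ u v : Fin n, ¬ A u u → ¬ A v v → u ≠ v → ¬ (A u v ∧ A v u))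
    (hItrans : ∀ u v w : Fin n, ¬ A u u → ¬ A v v → ¬ A w w → A u v → A v w → A u w) :
    ∀ u : Fin n, ¬ A u u → ∀ s : Fin n, A s s →
      (∀ v : Fin n,
        Relation.ReflTransGen (fun a b => A a a ∧ A b b ∧ A a b ∧ A b a) s v →
        A u v ∧ ¬ A v u) ∨
      (∀ v : Fin n,
        Relation.ReflTransGen (fun a b => A a a ∧ A b b ∧ A a b ∧ A b a) s v →
        A v u ∧ ¬ A u v) :=
  stmt7_general A hsemi hnoW hnoR'
end

section
/- Let H be a semicomplete digraph with possible loops satisfying: L contains neither R nor C*_3 as an induced subdigraph, the underlying graph of L^sym is a proper interval graph, I is a transitive tournament, and H contains no induced W, R', or directed 3-cycle with at least one loop. Then H has a Min-Max ordering of its vertices. -/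
/-!
Call an arc `xy` strict if `yx` is not an arc. Strict arcs form a strict partial order: a strict
path `a → b → c` closed by an arc `ca` is an induced `R`, `R'`, a looped directed 3-cycle, or a
violation of the transitivity of `I`. Non-strict arcs join looped vertices only (no `W`, and `I`
is a tournament), and the proper interval ordering of `L^sym` makes it claw-free and `C₄`-free.

Order the vertices by nondecreasing potential `#(strict in-neighbours) - #(strict out-neighbours)`.
Strict arcs increase the potential, so every vertex has an arc to each later vertex. If `xy` is
strict and `z` is symmetric to both `x` and `y`, then claw- and `C₄`-freeness force the strict
in-neighbourhood of `z` into that of `y` (which also contains `x`) and the strict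
out-neighbourhood of `y` into that of `z`, so `z` has smaller potential than `y`. Hence every
symmetric pair is symmetric to all vertices between its ends, and an ordering with these two
properties is a Min-Max ordering.
-/

namespace MinMaxOrdering

variable {V : Type*}

def StrictArc (A : V → V → Prop) (x y : V) : Prop := A x y ∧ ¬ A y x

def SymArc (A : V → V → Prop) (x y : V) : Prop := A x y ∧ A y x

def ClawFree (S : V → V → Prop) : Prop :=
  ∀ z x y w, x ≠ y → x ≠ w → y ≠ w → S z x → S z y → S z w → S x y ∨ S x w ∨ S y w

def C4Free (S : V → V → Prop) : Prop :=
  ∀ x z y w, x ≠ y → z ≠ w → S x z → S z y → S y w → S w x → S x y ∨ S z w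

/-- `f` is a proper interval (umbrella) ordering of the restriction of `S` to `P`. -/
def IsUmbrellaOn (P : V → Prop) (S : V → V → Prop) (f : V → ℕ) : Prop :=
  (∀ x y, P x → P y → f x = f y → x = y) ∧
    ∀ x y z, P x → P y → P z → f x < f y → f y < f z → S x z → S x y ∧ S y z

namespace IsUmbrellaOn

variable {P : V → Prop} {S : V → V → Prop} {f : V → ℕ}

theorem lt_or_gt (hf : IsUmbrellaOn P S f) {x y : V} (hx : P x) (hy : P y) (hxy : x ≠ y) :
    f x < f y ∨ f y < f x :=
  lt_or_gt_of_ne fun h => hxy (hf.1 x y hx hy h)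

variable (hS : ∀ {x y}, S x y → S y x) (hP : ∀ x y, x ≠ y → S x y → P x ∧ P y)
include hS hP

theorem between (hf : IsUmbrellaOn P S f) {z s t : V} (hst : s ≠ t) (hzs : S z s) (hzt : S z t)
    (hnst : ¬ S s t) : f s < f z ∧ f z < f t ∨ f t < f z ∧ f z < f s := by
  have hzs' : z ≠ s := by rintro rfl; exact hnst hzt
  have hzt' : z ≠ t := by rintro rfl; exact hnst (hS hzs)
  obtain ⟨hz, hs⟩ := hP z s hzs' hzs
  have ht := (hP z t hzt' hzt).2
  rcases hf.lt_or_gt hz hs hzs' with h1 | h1 <;> rcases hf.lt_or_gt hz ht hzt' with h2 | h2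
  · rcases hf.lt_or_gt hs ht hst with h3 | h3
    · exact absurd (hf.2 z s t hz hs ht h1 h3 hzt).2 hnst
    · exact absurd (hS (hf.2 z t s hz ht hs h2 h3 hzs).2) hnst
  · exact Or.inr ⟨h2, h1⟩
  · exact Or.inl ⟨h1, h2⟩
  · rcases hf.lt_or_gt hs ht hst with h3 | h3
    · exact absurd (hf.2 s t z hs ht hz h3 h2 (hS hzs)).1 hnst
    · exact absurd (hS (hf.2 t s z ht hs hz h3 h1 (hS hzt)).1) hnst

theorem clawFree (hf : IsUmbrellaOn P S f) : ClawFree S := by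
  intro z x y w hxy hxw hyw hzx hzy hzw
  by_contra! h
  have := hf.between hS hP hxy hzx hzy h.1
  have := hf.between hS hP hxw hzx hzw h.2.1
  have := hf.between hS hP hyw hzy hzw h.2.2
  omega

theorem c4Free (hf : IsUmbrellaOn P S f) : C4Free S := by
  intro x z y w hxy hzw hxz hzy hyw hwx
  by_contra! h
  obtain ⟨hnxy, hnzw⟩ := h
  have hz := hf.between hS hP hxy (hS hxz) hzy hnxy
  have hw := hf.between hS hP hxy hwx (hS hyw) hnxy
  obtain ⟨hPx, hPz⟩ := hP x z (by rintro rfl; exact hnxy hzy) hxz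
  obtain ⟨hPy, hPw⟩ := hP y w (by rintro rfl; exact hnxy (hS hwx)) hyw
  rcases hf.lt_or_gt hPz hPw hzw with h | h <;> rcases hz with hz | hz
  · exact hnzw (hf.2 x z w hPx hPz hPw hz.1 h (hS hwx)).2
  · exact hnzw (hf.2 y z w hPy hPz hPw hz.1 h hyw).2
  · exact hnzw (hS (hf.2 x w z hPx hPw hPz (by omega) h hxz).2)
  · exact hnzw (hS (hf.2 y w z hPy hPw hPz (by omega) h (hS hzy)).2)

end IsUmbrellaOn

section Arcs

variable {A : V → V → Prop} {x y z : V}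

theorem StrictArc.ne (h : StrictArc A x y) : x ≠ y := by
  rintro rfl
  exact h.2 h.1

theorem StrictArc.not_symArc (h : StrictArc A x y) : ¬ SymArc A x y :=
  fun h' => h.2 h'.2

theorem SymArc.symm (h : SymArc A x y) : SymArc A y x := ⟨h.2, h.1⟩

theorem symArc_flip : SymArc (flip A) = SymArc A := by
  funext x y
  exact propext and_comm

theorem SymArc.loops (hnoW : ¬ ∃ a b, a ≠ b ∧ A a b ∧ A b a ∧ A b b ∧ ¬ A a a)
    (hItour : ∀ u v, ¬ A u u → ¬ A v v → u ≠ v → ¬ (A u v ∧ A v u))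
    (hxy : x ≠ y) (h : SymArc A x y) : A x x ∧ A y y := by
  by_cases hx : A x x <;> by_cases hy : A y y
  · exact ⟨hx, hy⟩
  · exact absurd ⟨y, x, hxy.symm, h.2, h.1, hx, hy⟩ hnoW
  · exact absurd ⟨x, y, hxy, h.1, h.2, hy, hx⟩ hnoW
  · exact absurd h (hItour x y hx hy hxy)

theorem strictArc_trans (htotal : ∀ x y, x ≠ y → A x y ∨ A y x)
    (hloops : ∀ x y, x ≠ y → SymArc A x y → A x x ∧ A y y)
    (hItrans : ∀ u v w, ¬ A u u → ¬ A v v → ¬ A w w → A u v → A v w → A u w)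
    (hnoR' : ¬ ∃ a b c, a ≠ b ∧ a ≠ c ∧ b ≠ c ∧
      A a b ∧ ¬ A b a ∧ A b c ∧ A c b ∧ A c a ∧ ¬ A a c ∧ A b b ∧ A c c ∧ ¬ A a a)
    (hnoC3loop : ¬ ∃ a b c, a ≠ b ∧ a ≠ c ∧ b ≠ c ∧
      A a b ∧ A b c ∧ A c a ∧ ¬ A b a ∧ ¬ A c b ∧ ¬ A a c ∧ (A a a ∨ A b b ∨ A c c))
    (hLnoR : ¬ ∃ a b c, A a a ∧ A b b ∧ A c c ∧ a ≠ b ∧ a ≠ c ∧ b ≠ c ∧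
      A a b ∧ A b c ∧ A c a ∧ A a c ∧ ¬ A b a ∧ ¬ A c b)
    (hxy : StrictArc A x y) (hyz : StrictArc A y z) : StrictArc A x z := by
  have hxz : x ≠ z := by
    rintro rfl
    exact hxy.2 hyz.1
  have hzx : ¬ A z x := by
    intro hzx
    by_cases hxz' : A x z
    · obtain ⟨hxx, hzz⟩ := hloops x z hxz ⟨hxz', hzx⟩
      by_cases hyy : A y y
      · exact hLnoR ⟨x, y, z, hxx, hyy, hzz, hxy.ne, hxz, hyz.ne, hxy.1, hyz.1, hzx, hxz',
          hxy.2, hyz.2⟩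
      · exact hnoR' ⟨y, z, x, hyz.ne, hxy.ne.symm, hxz.symm, hyz.1, hyz.2, hzx, hxz', hxy.1,
          hxy.2, hzz, hxx, hyy⟩
    · by_cases hloop : A x x ∨ A y y ∨ A z z
      · exact hnoC3loop ⟨x, y, z, hxy.ne, hxz, hyz.ne, hxy.1, hyz.1, hzx, hxy.2, hyz.2, hxz',
          hloop⟩
      · push Not at hloop
        exact hxz' (hItrans x y z hloop.1 hloop.2.1 hloop.2.2 hxy.1 hyz.1)
  exact ⟨(htotal z x hxz.symm).resolve_left hzx, hzx⟩

theorem strictArc_or_strictArc_or_symArc (htotal : ∀ x y, x ≠ y → A x y ∨ A y x)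
    (hxy : x ≠ y) : StrictArc A x y ∨ StrictArc A y x ∨ SymArc A x y := by
  unfold StrictArc SymArc
  have := htotal x y hxy
  tauto

end Arcs

section Potential

variable {A : V → V → Prop} {x y z : V}

def strictIn (A : V → V → Prop) (v : V) : Set V := {w | StrictArc A w v}

def strictOut (A : V → V → Prop) (v : V) : Set V := {w | StrictArc A v w}

noncomputable def potential (A : V → V → Prop) (v : V) : ℤ :=
  (strictIn A v).ncard - (strictOut A v).ncard

theorem potential_flip (v : V) : potential (flip A) v = -potential A v :=
  (neg_sub _ _).symm

variable [Finite V]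

theorem potential_lt_of_subset {w : V} (hin : strictIn A x ⊆ strictIn A y)
    (hout : strictOut A y ⊆ strictOut A x) (hwy : w ∈ strictIn A y) (hwx : w ∉ strictIn A x) :
    potential A x < potential A y := by
  have := Set.ncard_lt_ncard ((Set.ssubset_iff_of_subset hin).2 ⟨w, hwy, hwx⟩)
  have := Set.ncard_le_ncard hout
  unfold potential
  omega

variable (htotal : ∀ x y, x ≠ y → A x y ∨ A y x)
  (htrans : ∀ x y z, StrictArc A x y → StrictArc A y z → StrictArc A x z)
  (hclaw : ClawFree (SymArc A)) (hC4 : C4Free (SymArc A))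

include htrans in
theorem potential_lt_of_strictArc (h : StrictArc A x y) : potential A x < potential A y :=
  potential_lt_of_subset (fun w hw => htrans w x y hw h) (fun w hw => htrans x y w h hw) h
    fun hx => hx.ne rfl

include htotal htrans in
theorem arc_of_potential_le (hxy : x ≠ y) (h : potential A x ≤ potential A y) : A x y := by
  by_contra hnxy
  exact (potential_lt_of_strictArc htrans ⟨(htotal x y hxy).resolve_left hnxy, hnxy⟩).not_ge h

include htotal htrans hclaw hC4 in
theorem potential_lt_of_strictArc_of_symArc (hxy : StrictArc A x y) (hxz : SymArc A x z)
    (hyz : SymArc A y z) : potential A z < potential A y := by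
  have hin : strictIn A z ⊆ strictIn A y := by
    intro w (hwz : StrictArc A w z)
    have hwy : w ≠ y := by rintro rfl; exact hwz.not_symArc hyz
    rcases strictArc_or_strictArc_or_symArc htotal hwy with h | h | hwy
    · exact h
    · exact absurd hyz (htrans _ _ _ h hwz).not_symArc
    have hxw : x ≠ w := by rintro rfl; exact hwz.not_symArc hxz
    rcases strictArc_or_strictArc_or_symArc htotal hxw with h | h | hxw
    · exact absurd hxz (htrans _ _ _ h hwz).not_symArc
    · exact absurd hwy (htrans _ _ _ h hxy).not_symArc
    · exact (hC4 x z y w hxy.ne hwz.ne.symm hxz hyz.symm hwy.symm hxw.symm).elim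
        (absurd · hxy.not_symArc) fun h => absurd h.symm hwz.not_symArc
  have hout : strictOut A y ⊆ strictOut A z := by
    intro w (hyw : StrictArc A y w)
    have hzw : z ≠ w := by rintro rfl; exact hyw.not_symArc hyz
    rcases strictArc_or_strictArc_or_symArc htotal hzw with h | h | hzw
    · exact h
    · exact absurd (hin h).1 hyw.2
    have hxw := htrans _ _ _ hxy hyw
    rcases hclaw z x y w hxy.ne hxw.ne hyw.ne hxz.symm hyz.symm hzw with h | h | h
    · exact absurd h hxy.not_symArc
    · exact absurd h hxw.not_symArc
    · exact absurd h hyw.not_symArc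
  exact potential_lt_of_subset hin hout hxy fun h => h.2 hxz.2

include htotal htrans hclaw hC4 in
theorem potential_lt_of_symArc_of_strictArc (hyz : StrictArc A y z) (hxy : SymArc A x y)
    (hxz : SymArc A x z) : potential A y < potential A x := by
  have := potential_lt_of_strictArc_of_symArc (A := flip A) (fun x y h => (htotal x y h).symm)
    (fun x y z h₁ h₂ => htrans z y x h₂ h₁) (symArc_flip ▸ hclaw) (symArc_flip ▸ hC4)
    (x := z) hyz hxz hxy
  rw [potential_flip, potential_flip] at this
  omega

include htotal htrans hclaw hC4 in
theorem arcs_of_potential_le_of_symArc (hxy : x ≠ y) (hyz : y ≠ z)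
    (h₁ : potential A x ≤ potential A y) (h₂ : potential A y ≤ potential A z)
    (hxz : SymArc A x z) : A y x ∧ A z y := by
  have hAxy := arc_of_potential_le htotal htrans hxy h₁
  have hAyz := arc_of_potential_le htotal htrans hyz h₂
  constructor
  · by_contra hyx
    have hsym : SymArc A y z :=
      ⟨hAyz, by_contra fun hzy => (htrans _ _ _ ⟨hAxy, hyx⟩ ⟨hAyz, hzy⟩).not_symArc hxz⟩
    exact (potential_lt_of_strictArc_of_symArc htotal htrans hclaw hC4 ⟨hAxy, hyx⟩ hxz
      hsym).not_ge h₂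
  · by_contra hzy
    have hsym : SymArc A x y :=
      ⟨hAxy, by_contra fun hyx => (htrans _ _ _ ⟨hAxy, hyx⟩ ⟨hAyz, hzy⟩).not_symArc hxz⟩
    exact (potential_lt_of_symArc_of_strictArc htotal htrans hclaw hC4 ⟨hAyz, hzy⟩ hsym
      hxz).not_ge h₁

end Potential

section MinMax

variable {α : Type*} [LinearOrder α] {B : α → α → Prop}

def IsMinMax (B : α → α → Prop) : Prop :=
  ∀ a b c d, B a b → B c d → B (min a c) (min b d) ∧ B (max a c) (max b d)

variable (hloops : ∀ x y, x ≠ y → SymArc B x y → B x x ∧ B y y)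
  (hfwd : ∀ x y, x < y → B x y) (hint : ∀ x y z, x < y → y < z → SymArc B x z → B y x ∧ B z y)
include hloops hfwd hint

theorem arcs_of_le_of_lt {a b c d : α} (hac : a ≤ c) (hdb : d < b) (hab : B a b)
    (hcd : B c d) : B a d ∧ B c b := by
  constructor
  · rcases hac.eq_or_lt with rfl | hac
    · exact hcd
    rcases lt_trichotomy a d with h | rfl | h
    · exact hfwd a d h
    · exact (hloops a c hac.ne ⟨hfwd a c hac, hcd⟩).1
    · exact (hint d a c h hac ⟨hfwd d c (h.trans hac), hcd⟩).1
  · rcases lt_trichotomy c b with h | rfl | h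
    · exact hfwd c b h
    · exact (hloops d c hdb.ne ⟨hfwd d c hdb, hcd⟩).2
    · exact (hint d b c hdb h ⟨hfwd d c (hdb.trans h), hcd⟩).2

theorem isMinMax_of_forward : IsMinMax B := by
  intro a b c d hab hcd
  wlog hac : a ≤ c generalizing a b c d
  · rw [min_comm a, max_comm a, min_comm b, max_comm b]
    exact this c d a b hcd hab (le_of_not_ge hac)
  rw [min_eq_left hac, max_eq_right hac]
  rcases le_or_gt b d with hbd | hdb
  · rw [min_eq_left hbd, max_eq_right hbd]
    exact ⟨hab, hcd⟩
  · rw [min_eq_right hdb.le, max_eq_left hdb.le]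
    exact arcs_of_le_of_lt hloops hfwd hint hac hdb hab hcd

end MinMax

end MinMaxOrdering

open MinMaxOrdering

theorem stmt9_general {n : ℕ} (A : Fin n → Fin n → Prop)
    (hsemi : ∀ u v : Fin n, u ≠ v → A u v ∨ A v u)
    (hnoW : ¬ ∃ a b : Fin n, a ≠ b ∧ A a b ∧ A b a ∧ A b b ∧ ¬ A a a)
    (hnoR' : ¬ ∃ a b c : Fin n, a ≠ b ∧ a ≠ c ∧ b ≠ c ∧
      A a b ∧ ¬ A b a ∧ A b c ∧ A c b ∧ A c a ∧ ¬ A a c ∧ A b b ∧ A c c ∧ ¬ A a a)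
    (hnoC3loop : ¬ ∃ a b c : Fin n, a ≠ b ∧ a ≠ c ∧ b ≠ c ∧
      A a b ∧ A b c ∧ A c a ∧ ¬ A b a ∧ ¬ A c b ∧ ¬ A a c ∧ (A a a ∨ A b b ∨ A c c))
    (hLnoR : ¬ ∃ a b c : Fin n, A a a ∧ A b b ∧ A c c ∧ a ≠ b ∧ a ≠ c ∧ b ≠ c ∧
      A a b ∧ A b c ∧ A c a ∧ A a c ∧ ¬ A b a ∧ ¬ A c b)
    (hpin : ∃ f : Fin n → ℕ, (∀ x y, A x x → A y y → f x = f y → x = y) ∧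
      ∀ x y z : Fin n, A x x → A y y → A z z → f x < f y → f y < f z →
        (A x z ∧ A z x) → (A x y ∧ A y x) ∧ (A y z ∧ A z y))
    (hItour : ∀ u v : Fin n, ¬ A u u → ¬ A v v → u ≠ v → ¬ (A u v ∧ A v u))
    (hItrans : ∀ u v w : Fin n, ¬ A u u → ¬ A v v → ¬ A w w → A u v → A v w → A u w) :
    ∃ σ : Equiv.Perm (Fin n), ∀ i k j s : Fin n, A (σ i) (σ k) → A (σ j) (σ s) →
      A (σ (min i j)) (σ (min k s)) ∧ A (σ (max i j)) (σ (max k s)) := by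
  have hloops : ∀ x y, x ≠ y → SymArc A x y → A x x ∧ A y y :=
    fun _ _ => SymArc.loops hnoW hItour
  have htrans : ∀ x y z, StrictArc A x y → StrictArc A y z → StrictArc A x z :=
    fun _ _ _ => strictArc_trans hsemi hloops hItrans hnoR' hnoC3loop hLnoR
  obtain ⟨f, hf⟩ := hpin
  have hf : IsUmbrellaOn (fun x => A x x) (SymArc A) f := hf
  have hclaw := hf.clawFree SymArc.symm hloops
  have hC4 := hf.c4Free SymArc.symm hloops
  let σ := Tuple.sort (potential A)
  have hmono : Monotone (potential A ∘ σ) := Tuple.monotone_sort _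
  refine ⟨σ, isMinMax_of_forward (B := fun i k => A (σ i) (σ k)) ?_ ?_ ?_⟩
  · exact fun i k hik => hloops _ _ (σ.injective.ne hik)
  · exact fun i k hik =>
      arc_of_potential_le (A := A) hsemi htrans (σ.injective.ne hik.ne) (hmono hik.le)
  · exact fun i j k hij hjk => arcs_of_potential_le_of_symArc (A := A) hsemi htrans hclaw hC4
      (σ.injective.ne hij.ne) (σ.injective.ne hjk.ne) (hmono hij.le) (hmono hjk.le)

/-- Under the same polynomiality conditions as Statement 7, `H` has a
Min-Max ordering. -/
theorem stmt9 {n : ℕ} (A : Fin n → Fin n → Prop)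
    (hsemi : ∀ u v : Fin n, u ≠ v → A u v ∨ A v u)
    (hnoW : ¬ ∃ a b : Fin n, a ≠ b ∧ A a b ∧ A b a ∧ A b b ∧ ¬ A a a)
    (hnoR' : ¬ ∃ a b c : Fin n, a ≠ b ∧ a ≠ c ∧ b ≠ c ∧
      A a b ∧ ¬ A b a ∧ A b c ∧ A c b ∧ A c a ∧ ¬ A a c ∧ A b b ∧ A c c ∧ ¬ A a a)
    (hnoC3loop : ¬ ∃ a b c : Fin n, a ≠ b ∧ a ≠ c ∧ b ≠ c ∧
      A a b ∧ A b c ∧ A c a ∧ ¬ A b a ∧ ¬ A c b ∧ ¬ A a c ∧ (A a a ∨ A b b ∨ A c c))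
    (hLnoR : ¬ ∃ a b c : Fin n, A a a ∧ A b b ∧ A c c ∧ a ≠ b ∧ a ≠ c ∧ b ≠ c ∧
      A a b ∧ A b c ∧ A c a ∧ A a c ∧ ¬ A b a ∧ ¬ A c b)
    (hLnoC3 : ¬ ∃ a b c : Fin n, A a a ∧ A b b ∧ A c c ∧ a ≠ b ∧ a ≠ c ∧ b ≠ c ∧
      A a b ∧ A b c ∧ A c a ∧ ¬ A b a ∧ ¬ A c b ∧ ¬ A a c)
    (hpin : ∃ f : Fin n → ℕ, (∀ x y, A x x → A y y → f x = f y → x = y) ∧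
      ∀ x y z : Fin n, A x x → A y y → A z z → f x < f y → f y < f z →
        (A x z ∧ A z x) → (A x y ∧ A y x) ∧ (A y z ∧ A z y))
    (hItour : ∀ u v : Fin n, ¬ A u u → ¬ A v v → u ≠ v → ¬ (A u v ∧ A v u))
    (hItrans : ∀ u v w : Fin n, ¬ A u u → ¬ A v v → ¬ A w w → A u v → A v w → A u w) :
    ∃ σ : Equiv.Perm (Fin n), ∀ i k j s : Fin n, A (σ i) (σ k) → A (σ j) (σ s) →
      A (σ (min i j)) (σ (min k s)) ∧ A (σ (max i j)) (σ (max k s)) :=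
  stmt9_general A hsemi hnoW hnoR' hnoC3loop hLnoR hpin hItour hItrans
end

section
/- Let H = TT_k[S_1,...,S_k] be the composition of a transitive tournament TT_k with digraphs S_1,...,S_k, where each S_i is either a single loopless vertex or a reflexive semicomplete digraph not containing R as an induced subdigraph whose symmetric subdigraph has connected underlying graph that is a proper interval graph. Then the loopless part I of H is a transitive tournament, and H contains no induced copy of W, R', or a directed 3-cycle with at least one loop. -/
/-!
A loopless vertex is the whole of its part, so every arc at it goes forward in the order of
`TT_k`; this makes the loopless part a transitive tournament and excludes `W` and `R'`, each of
which has a loopless vertex lying on a closed walk. A directed 3-cycle with no 2-cycles lies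
inside a single part, necessarily a reflexive block `S_i`. There, with `f` an umbrella ordering
of the symmetric part, take such a cycle `a → b → c → a` with `f a < f b < f c`: connectivity
gives a symmetric neighbour `x` of `b` with `f x < f b`, the umbrella property puts it between
`a` and `b`, and the absence of an induced `R` forces `a → x → c → a` to be another such cycle.
Descent on `f b` rules out this shape; the other cyclic shape is its converse.
-/

open Relation

theorem Relation.ReflTransGen.exists_rel_of_pred_of_not_pred {α : Type*} {r : α → α → Prop} {p : α → Prop}
    {a b : α} (h : ReflTransGen r a b) (ha : p a) (hb : ¬ p b) : ∃ x y, r x y ∧ p x ∧ ¬ p y := by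
  by_contra! hclosed
  induction h with
  | refl => exact hb ha
  | tail _ hr ih => exact ih fun hp => hb (hclosed _ _ hr hp)

section Arcs

variable {V : Type*}

def StrictArc (A : V → V → Prop) (x y : V) : Prop := A x y ∧ ¬ A y x

def SymmArc (A : V → V → Prop) (x y : V) : Prop := A x y ∧ A y x

theorem StrictArc.ne {A : V → V → Prop} {x y : V} (h : StrictArc A x y) : x ≠ y := by
  rintro rfl
  exact h.2 h.1

theorem SymmArc.symm {A : V → V → Prop} {x y : V} (h : SymmArc A x y) : SymmArc A y x :=
  ⟨h.2, h.1⟩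

/-- The field `not_symmArc_of_strictArc` excludes an induced `R`; `f` is an umbrella ordering,
witnessing that the symmetric part is a proper interval graph. -/
structure IsUmbrellaBlock (A : V → V → Prop) (P : V → Prop) (f : V → ℕ) : Prop where
  semicomplete : ∀ x y, P x → P y → x ≠ y → A x y ∨ A y x
  not_symmArc_of_strictArc : ∀ u v w, P u → P v → P w →
    StrictArc A u v → StrictArc A v w → ¬ SymmArc A w u
  connected : ∀ x y, P x → P y → ReflTransGen (fun a b => P a ∧ P b ∧ SymmArc A a b) x y
  injOn : ∀ x y, P x → P y → f x = f y → x = y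
  umbrella : ∀ x y z, P x → P y → P z → f x < f y → f y < f z →
    SymmArc A x z → SymmArc A x y ∧ SymmArc A y z

namespace IsUmbrellaBlock

variable {A : V → V → Prop} {P : V → Prop} {f : V → ℕ}

theorem reverse (h : IsUmbrellaBlock A P f) : IsUmbrellaBlock (flip A) P f where
  semicomplete x y hx hy hxy := (h.semicomplete x y hx hy hxy).symm
  not_symmArc_of_strictArc u v w hu hv hw huv hvw hwu :=
    h.not_symmArc_of_strictArc w v u hw hv hu hvw huv hwu
  connected x y hx hy :=
    ReflTransGen.mono (fun _ _ hab => ⟨hab.1, hab.2.1, hab.2.2.symm⟩) x y (h.connected x y hx hy)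
  injOn := h.injOn
  umbrella x y z hx hy hz hxy hyz hxz :=
    (h.umbrella x y z hx hy hz hxy hyz hxz.symm).imp SymmArc.symm SymmArc.symm

theorem exists_symmArc_lt (h : IsUmbrellaBlock A P f) {v m : V} (hv : P v) (hm : P m)
    (hvm : f v < f m) : ∃ x, P x ∧ f x < f m ∧ SymmArc A x m := by
  obtain ⟨x, y, ⟨hx, hy, hxy⟩, hxm, hmy⟩ :=
    (h.connected v m hv hm).exists_rel_of_pred_of_not_pred (p := fun z => f z < f m) hvm (lt_irrefl _)
  refine ⟨x, hx, hxm, ?_⟩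
  rcases (not_lt.mp hmy).eq_or_lt with hym | hmy
  · rwa [h.injOn m y hm hy hym]
  · exact (h.umbrella x m y hx hm hy hxm hmy hxy).1

/-- Otherwise `m → c → x` together with `x ↔ m` would induce `R`. -/
theorem strictArc_of_symmArc (h : IsUmbrellaBlock A P f) {x m c : V} (hx : P x) (hm : P m)
    (hc : P c) (hxm : SymmArc A x m) (hmc : StrictArc A m c) (hxc : ¬ SymmArc A x c) :
    StrictArc A x c := by
  have hne : x ≠ c := by
    rintro rfl
    exact hmc.2 hxm.1
  by_cases hcx : A c x
  · exact absurd hxm (h.not_symmArc_of_strictArc m c x hm hc hx hmc ⟨hcx, fun hxc' => hxc ⟨hxc', hcx⟩⟩)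
  · exact ⟨(h.semicomplete x c hx hc hne).resolve_right hcx, hcx⟩

theorem not_strictCycle_of_lt_of_lt (h : IsUmbrellaBlock A P f) {a b c : V} (ha : P a)
    (hb : P b) (hc : P c) (hab : f a < f b) (hbc : f b < f c) (hAab : StrictArc A a b)
    (hAbc : StrictArc A b c) : ¬ StrictArc A c a := by
  intro hAca
  obtain ⟨x, hx, hxb, hAxb⟩ := h.exists_symmArc_lt ha hb hab
  have hax : f a < f x := by
    rcases lt_trichotomy (f x) (f a) with hxa | hxa | hxa
    · exact absurd (h.umbrella x a b hx ha hb hxa hab hAxb).2.2 hAab.2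
    · obtain rfl := h.injOn x a hx ha hxa
      exact absurd hAxb.2 hAab.2
    · exact hxa
  have hAxc : StrictArc A x c := h.strictArc_of_symmArc hx hb hc hAxb hAbc
    fun hAxc => hAbc.2 (h.umbrella x b c hx hb hc hxb hbc hAxc).2.2
  -- in the converse digraph, `b → a` is strict and `x ↔ b`
  have hAax : StrictArc A a x := h.reverse.strictArc_of_symmArc hx hb ha hAxb.symm hAab
    (h.not_symmArc_of_strictArc x c a hx hc ha hAxc hAca)
  exact h.not_strictCycle_of_lt_of_lt ha hx hc hax (hxb.trans hbc) hAax hAxc hAca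
termination_by f b

theorem not_strictCycle_of_lt (h : IsUmbrellaBlock A P f) {a b c : V} (ha : P a) (hb : P b)
    (hc : P c) (hab : f a < f b) (hac : f a < f c) (hAab : StrictArc A a b)
    (hAbc : StrictArc A b c) : ¬ StrictArc A c a := by
  intro hAca
  rcases lt_trichotomy (f b) (f c) with hbc | hbc | hbc
  · exact h.not_strictCycle_of_lt_of_lt ha hb hc hab hbc hAab hAbc hAca
  · exact hAbc.ne (h.injOn b c hb hc hbc)
  · exact h.reverse.not_strictCycle_of_lt_of_lt ha hc hb hac hbc hAca hAbc hAab

theorem not_strictCycle (h : IsUmbrellaBlock A P f) {a b c : V} (ha : P a) (hb : P b)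
    (hc : P c) (hAab : StrictArc A a b) (hAbc : StrictArc A b c) : ¬ StrictArc A c a := by
  intro hAca
  have hab : f a ≠ f b := fun he => hAab.ne (h.injOn a b ha hb he)
  have hbc : f b ≠ f c := fun he => hAbc.ne (h.injOn b c hb hc he)
  have hca : f c ≠ f a := fun he => hAca.ne (h.injOn c a hc ha he)
  rcases (by omega : (f a < f b ∧ f a < f c) ∨ (f b < f c ∧ f b < f a) ∨
      (f c < f a ∧ f c < f b)) with ⟨h₁, h₂⟩ | ⟨h₁, h₂⟩ | ⟨h₁, h₂⟩
  · exact h.not_strictCycle_of_lt ha hb hc h₁ h₂ hAab hAbc hAca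
  · exact h.not_strictCycle_of_lt hb hc ha h₁ h₂ hAbc hAca hAab
  · exact h.not_strictCycle_of_lt hc ha hb h₁ h₂ hAca hAab hAbc

end IsUmbrellaBlock

end Arcs

section Composition

variable {V ι : Type*} [LinearOrder ι] {A : V → V → Prop} {part : V → ι}

theorem part_le_of_arc (hbetween : ∀ x y, part x < part y → StrictArc A x y) {x y : V}
    (h : A x y) : part x ≤ part y :=
  le_of_not_gt fun hyx => (hbetween y x hyx).2 h

theorem part_lt_of_arc_of_not_loop (hbetween : ∀ x y, part x < part y → StrictArc A x y)
    (hsingle : ∀ u x, ¬ A u u → part x = part u → x = u) {u v : V} (hu : ¬ A u u)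
    (h : A u v) : part u < part v := by
  refine (part_le_of_arc hbetween h).lt_of_ne fun huv => ?_
  obtain rfl := hsingle u v hu huv.symm
  exact hu h

end Composition

/-- If `H = TT_k[S_1,...,S_k]` (encoded by a partition map `part` into
`Fin k`, all arcs going forward between distinct parts), where each part is either a
single loopless vertex or a reflexive semicomplete digraph with no induced `R` whose
symmetric subdigraph is connected with proper interval underlying graph, then the
loopless part of `H` is a transitive tournament and `H` has no induced `W`, `R'`, or
directed 3-cycle with at least one loop. -/
theorem stmt10 {V : Type*} {k : ℕ} (A : V → V → Prop) (part : V → Fin k)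
    (hbetween : ∀ x y : V, part x < part y → A x y ∧ ¬ A y x)
    (hparts : ∀ i : Fin k,
      ((∃! x : V, part x = i) ∧ (∀ x, part x = i → ¬ A x x)) ∨
      ((∀ x, part x = i → A x x) ∧
       (∀ x y, part x = i → part y = i → x ≠ y → A x y ∨ A y x) ∧
       (¬ ∃ a b c : V, part a = i ∧ part b = i ∧ part c = i ∧
          a ≠ b ∧ a ≠ c ∧ b ≠ c ∧
          A a b ∧ A b c ∧ A c a ∧ A a c ∧ ¬ A b a ∧ ¬ A c b) ∧
       (∀ x y, part x = i → part y = i →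
          Relation.ReflTransGen
            (fun a b => part a = i ∧ part b = i ∧ A a b ∧ A b a) x y) ∧
       (∃ f : V → ℕ, (∀ x y, part x = i → part y = i → f x = f y → x = y) ∧
          ∀ x y z : V, part x = i → part y = i → part z = i →
            f x < f y → f y < f z → (A x z ∧ A z x) →
            (A x y ∧ A y x) ∧ (A y z ∧ A z y)))) :
    ((∀ u v : V, ¬ A u u → ¬ A v v → u ≠ v → (A u v ∨ A v u) ∧ ¬ (A u v ∧ A v u)) ∧
     (∀ u v w : V, ¬ A u u → ¬ A v v → ¬ A w w → A u v → A v w → A u w)) ∧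
    (¬ ∃ a b : V, a ≠ b ∧ A a b ∧ A b a ∧ A b b ∧ ¬ A a a) ∧
    (¬ ∃ a b c : V, a ≠ b ∧ a ≠ c ∧ b ≠ c ∧
      A a b ∧ ¬ A b a ∧ A b c ∧ A c b ∧ A c a ∧ ¬ A a c ∧ A b b ∧ A c c ∧ ¬ A a a) ∧
    (¬ ∃ a b c : V, a ≠ b ∧ a ≠ c ∧ b ≠ c ∧
      A a b ∧ A b c ∧ A c a ∧ ¬ A b a ∧ ¬ A c b ∧ ¬ A a c ∧
      (A a a ∨ A b b ∨ A c c)) := by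
  have hsingle : ∀ u x, ¬ A u u → part x = part u → x = u := by
    intro u x hu hx
    rcases hparts (part u) with ⟨hunique, -⟩ | ⟨hrefl, -⟩
    · exact hunique.unique hx rfl
    · exact absurd (hrefl u rfl) hu
  have hle {x y : V} : A x y → part x ≤ part y := part_le_of_arc hbetween
  have hlt {u v : V} : ¬ A u u → A u v → part u < part v :=
    part_lt_of_arc_of_not_loop hbetween hsingle
  refine ⟨⟨fun u v _ hv huv => ?_, fun u v w hu hv _ huv hvw => ?_⟩, ?_, ?_, ?_⟩
  · rcases Ne.lt_or_gt (mt (hsingle v u hv) huv) with h | h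
    · exact ⟨.inl (hbetween u v h).1, fun h' => (hbetween u v h).2 h'.2⟩
    · exact ⟨.inr (hbetween v u h).1, fun h' => (hbetween v u h).2 h'.1⟩
  · exact (hbetween u w ((hlt hu huv).trans (hlt hv hvw))).1
  · rintro ⟨a, b, -, hab, hba, -, ha⟩
    exact (hlt ha hab).not_ge (hle hba)
  · rintro ⟨a, b, c, -, -, -, hab, -, hbc, -, hca, -, -, -, ha⟩
    exact (hlt ha hab).not_ge ((hle hbc).trans (hle hca))
  · rintro ⟨a, b, c, hab, -, -, hAab, hAbc, hAca, hAba, hAcb, hAac, -⟩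
    have hpb : part b = part a := le_antisymm ((hle hAbc).trans (hle hAca)) (hle hAab)
    have hpc : part c = part a := le_antisymm (hle hAca) ((hle hAab).trans (hle hAbc))
    rcases hparts (part a) with ⟨hunique, -⟩ | ⟨-, hsemi, hnoR, hconn, f, hinj, humb⟩
    · exact hab (hunique.unique rfl hpb)
    · have hblock : IsUmbrellaBlock A (part · = part a) f :=
        ⟨hsemi, fun u v w hu hv hw huv hvw hwu =>
          hnoR ⟨u, v, w, hu, hv, hw, huv.ne, fun h => huv.2 (h ▸ hvw.1), hvw.ne,
            huv.1, hvw.1, hwu.1, hwu.2, huv.2, hvw.2⟩, hconn, hinj, humb⟩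
      exact hblock.not_strictCycle rfl hpb hpc ⟨hAab, hAba⟩ ⟨hAbc, hAcb⟩ ⟨hAca, hAac⟩
end

section
/- Let H be the digraph with vertex set {1,2,3} and arc set {12,23,32,31,22,33} (the digraph R'). For a loopless digraph G on p vertices, construct the bipartite digraph D with vertices {x_1, x_2 : x ∈ V(G)} and arcs {x_1 x_2 : x ∈ V(G)} ∪ {x_2 y_1 : xy ∈ A(G)}. Then for any homomorphism f of D to H in which no x_1 is mapped to 2 and no x_2 is mapped to 1 and no x_1 is mapped to 3 while x_2 is mapped to 2 for the same x, the set I = {x ∈ V(G) : f(x_1) = 1} is an independent set of G; conversely, every independent set I of G arises this way from the homomorphism g with g(x_1)=1, g(x_2)=2 for x ∈ I and g(x_1)=g(x_2)=3 otherwise. -/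
/-- The digraph `R'` on vertices `{0,1,2}` (standing for `{1,2,3}`) with arcs
`{12,23,32,31,22,33}`. -/
def RprimeArc : Fin 3 → Fin 3 → Prop := fun a b =>
  (a = 0 ∧ b = 1) ∨ (a = 1 ∧ b = 2) ∨ (a = 2 ∧ b = 1) ∨ (a = 2 ∧ b = 0) ∨
  (a = 1 ∧ b = 1) ∨ (a = 2 ∧ b = 2)

/-- The arcs of the bipartite digraph `D` built from a loopless digraph `G`:
vertices `x₁ = Sum.inl x` and `x₂ = Sum.inr x`, arcs `x₁x₂` for each vertex `x`
and `x₂y₁` for each arc `xy` of `G`. -/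
def DArc {V : Type*} (G : V → V → Prop) : (V ⊕ V) → (V ⊕ V) → Prop
  | Sum.inl x, Sum.inr y => x = y
  | Sum.inr x, Sum.inl y => G x y
  | _, _ => False

/-! In `R'` the only out-neighbour of `0` is `1`, and `1 → 0` is not an arc. So if
`f x₁ = f y₁ = 0` then `f x₂ = 1`, and an arc `x₂y₁` of `D` would have to go to `1 → 0`.
Conversely, send `x₁x₂` to the arc `0 → 1` for `x ∈ I` and to the loop at `2` otherwise;
an arc `x₂y₁` then lands on `1 → 2`, `2 → 0` or `2 → 2`, except when `x, y ∈ I`, where it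
would land on `1 → 0`: independence of `I` (and looplessness, for `x = y`) rules this out. -/

theorem rprimeArc_zero_left_iff {b : Fin 3} : RprimeArc 0 b ↔ b = 1 := by
  fin_cases b <;> simp [RprimeArc]

theorem not_rprimeArc_one_zero : ¬ RprimeArc 1 0 := by
  simp [RprimeArc]

section Homomorphism

variable {V : Type*} {G : V → V → Prop} {f : V ⊕ V → Fin 3}

theorem map_inr_eq_one_of_map_inl_eq_zero
    (hf : ∀ u v, DArc G u v → RprimeArc (f u) (f v)) {x : V} (hx : f (Sum.inl x) = 0) :
    f (Sum.inr x) = 1 :=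
  rprimeArc_zero_left_iff.mp (hx ▸ hf (Sum.inl x) (Sum.inr x) rfl)

theorem not_adj_of_map_inl_eq_zero
    (hf : ∀ u v, DArc G u v → RprimeArc (f u) (f v)) {x y : V}
    (hx : f (Sum.inl x) = 0) (hy : f (Sum.inl y) = 0) : ¬ G x y := by
  intro hxy
  have harc := hf (Sum.inr x) (Sum.inl y) hxy
  rw [map_inr_eq_one_of_map_inl_eq_zero hf hx, hy] at harc
  exact not_rprimeArc_one_zero harc

end Homomorphism

open Classical in
noncomputable def indepColoring {V : Type*} (I : Set V) : V ⊕ V → Fin 3 :=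
  Sum.elim (fun x => if x ∈ I then 0 else 2) (fun x => if x ∈ I then 1 else 2)

section IndepColoring

variable {V : Type*} {I : Set V} {x : V}

@[simp]
theorem indepColoring_inl_of_mem (hx : x ∈ I) : indepColoring I (Sum.inl x) = 0 := by
  simp [indepColoring, hx]

@[simp]
theorem indepColoring_inr_of_mem (hx : x ∈ I) : indepColoring I (Sum.inr x) = 1 := by
  simp [indepColoring, hx]

@[simp]
theorem indepColoring_inl_of_notMem (hx : x ∉ I) : indepColoring I (Sum.inl x) = 2 := by
  simp [indepColoring, hx]

@[simp]
theorem indepColoring_inr_of_notMem (hx : x ∉ I) : indepColoring I (Sum.inr x) = 2 := by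
  simp [indepColoring, hx]

theorem indepColoring_isHom {G : V → V → Prop} (hloopless : ∀ x, ¬ G x x)
    (hI : ∀ x ∈ I, ∀ y ∈ I, x ≠ y → ¬ G x y ∧ ¬ G y x) :
    ∀ u v, DArc G u v → RprimeArc (indepColoring I u) (indepColoring I v) := by
  rintro (x | x) (y | y) h <;> simp only [DArc] at h
  · subst h
    by_cases hx : x ∈ I <;> simp [hx, RprimeArc]
  · by_cases hy : y ∈ I
    · by_cases hx : x ∈ I
      · have hne : x ≠ y := fun e => hloopless x (e ▸ h)
        exact absurd h (hI x hx y hy hne).1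
      · simp [hx, hy, RprimeArc]
    · by_cases hx : x ∈ I <;> simp [hx, hy, RprimeArc]

end IndepColoring

/-- combinatorial core of the NP-hardness reduction for MinHOM(R'). -/
theorem stmt15 {V : Type*} (G : V → V → Prop) (hloopless : ∀ x, ¬ G x x) :
    (∀ f : V ⊕ V → Fin 3,
      (∀ u v : V ⊕ V, DArc G u v → RprimeArc (f u) (f v)) →
      (∀ x : V, f (Sum.inl x) ≠ 1) →
      (∀ x : V, f (Sum.inr x) ≠ 0) →
      (∀ x : V, ¬ (f (Sum.inl x) = 2 ∧ f (Sum.inr x) = 1)) →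
      ∀ x y : V, f (Sum.inl x) = 0 → f (Sum.inl y) = 0 → x ≠ y →
        ¬ G x y ∧ ¬ G y x) ∧
    (∀ I : Set V, (∀ x ∈ I, ∀ y ∈ I, x ≠ y → ¬ G x y ∧ ¬ G y x) →
      ∃ g : V ⊕ V → Fin 3,
        (∀ x ∈ I, g (Sum.inl x) = 0 ∧ g (Sum.inr x) = 1) ∧
        (∀ x ∉ I, g (Sum.inl x) = 2 ∧ g (Sum.inr x) = 2) ∧
        (∀ u v : V ⊕ V, DArc G u v → RprimeArc (g u) (g v)) ∧
        (∀ x : V, g (Sum.inl x) ≠ 1) ∧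
        (∀ x : V, g (Sum.inr x) ≠ 0) ∧
        (∀ x : V, ¬ (g (Sum.inl x) = 2 ∧ g (Sum.inr x) = 1)) ∧
        (∀ x : V, g (Sum.inl x) = 0 ↔ x ∈ I)) := by
  refine ⟨fun f hf _ _ _ x y hx hy _ =>
    ⟨not_adj_of_map_inl_eq_zero hf hx hy, not_adj_of_map_inl_eq_zero hf hy hx⟩, ?_⟩
  intro I hI
  refine ⟨indepColoring I, fun x hx => by simp [hx], fun x hx => by simp [hx],
    indepColoring_isHom hloopless hI, ?_, ?_, ?_, ?_⟩ <;>
    intro x <;> by_cases hx : x ∈ I <;> simp [hx]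
end
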